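/- arXiv:1902.04460 — 8 statements merged into one kernel-verified Lean document; each statement's English description precedes it below -/
import Mathlib

section
/- Let Γ be a discrete subgroup of E(n), and suppose (G, V) and (G′, V′) are both finite index cocompact translation pairs of Γ. Then there exists a ∈ ℝⁿ with V′ = V + a; in particular V and V′ are parallel affine subspaces of the same dimension. -/
open Metric Filter MeasureTheory Asymptotics

noncomputable section

/-- `ℝⁿ` as a Euclidean space. -/
abbrev En (n : ℕ) := EuclideanSpace ℝ (Fin n)

/-- The Euclidean group `E(n)`, i.e. the isometry group of `ℝⁿ`. -/
abbrev Isom (n : ℕ) := En n ≃ᵢ En n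

/-- The translation part `tran γ = γ 0` of a Euclidean isometry
(for `γ : x ↦ Ax + a` this is `a`). -/
def tran {n : ℕ} (γ : Isom n) : En n := γ 0

/-- The orthogonal part `ort γ` of a Euclidean isometry, as a self-map of `ℝⁿ`
(for `γ : x ↦ Ax + a` this is the map `x ↦ Ax`). -/
def ort {n : ℕ} (γ : Isom n) : En n → En n := fun x => γ x - γ 0

/-- A subgroup `Γ ≤ E(n)` is discrete (in the topology of `O(n) × ℝⁿ`) if and only if the
identity is isolated in `Γ`; the metric `sup_{‖x‖ ≤ 1} ‖γ x - x‖` induces that topology. -/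
def IsDiscreteSubgroup {n : ℕ} (Γ : Subgroup (Isom n)) : Prop :=
  ∃ ε > 0, ∀ γ ∈ Γ, γ ≠ 1 → ∃ x : En n, ‖x‖ ≤ 1 ∧ ε ≤ dist (γ x) x

/-- The subgroup of all translations of `ℝⁿ` inside the isometry group; the translation
subgroup `Γ_T` of a subgroup `Γ ≤ E(n)` is then `Γ ⊓ Translations n`. -/
def Translations (n : ℕ) : Subgroup (Isom n) where
  carrier := {γ : Isom n | ∀ x : En n, γ x = x + γ 0}
  one_mem' := by intro x; simp
  mul_mem' := by
    intro a b ha hb x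
    show a (b x) = x + a (b 0)
    rw [hb x, ha (x + b 0), hb 0, ha (0 + b 0)]
    abel
  inv_mem' := by
    intro a ha x
    show a.symm x = x + a.symm 0
    apply a.injective
    have h0 : a (a.symm 0) = 0 := a.apply_symm_apply 0
    rw [a.apply_symm_apply, ha (x + a.symm 0)]
    have hsum : a.symm 0 + a 0 = 0 := by
      have := ha (a.symm 0); rw [h0] at this; exact this.symm
    rw [add_assoc, hsum, add_zero]

/-- `(G, V)` is a cocompact translation pair of `Γ`: `G ≤ Γ`, `V` is a (nonempty) affine
subspace of `ℝⁿ` with `GV = V`, every `g ∈ G` restricts to `V` as a translation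
(by the vector `v = tran_V(g)`), and `V/G` is compact. -/
structure IsCocompactTranslationPair {n : ℕ} (Γ G : Subgroup (Isom n))
    (V : AffineSubspace ℝ (En n)) : Prop where
  le : G ≤ Γ
  nonempty : (V : Set (En n)).Nonempty
  invariant : ∀ g ∈ G, ∀ x ∈ (V : Set (En n)), g x ∈ (V : Set (En n))
  translation : ∀ g ∈ G, ∃ v : En n, ∀ x ∈ (V : Set (En n)), g x = x + v
  cocompact : ∃ K : Set (En n), IsCompact K ∧ K ⊆ (V : Set (En n)) ∧
    ∀ x ∈ (V : Set (En n)), ∃ g ∈ G, g x ∈ K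

/-- `N_Γ(r)`: the number of `γ ∈ Γ` with `|tran γ| ≤ r`. -/
def NCount {n : ℕ} (Γ : Subgroup (Isom n)) (r : ℝ) : ℕ :=
  {γ : Isom n | γ ∈ Γ ∧ ‖tran γ‖ ≤ r}.ncard

/-- `N_G^V(r)`: the number of `γ ∈ G` whose translation vector `tran_V γ` on `V`
satisfies `|tran_V γ| ≤ r`. -/
def NVCount {n : ℕ} (G : Subgroup (Isom n)) (V : AffineSubspace ℝ (En n)) (r : ℝ) : ℕ :=
  {γ : Isom n | γ ∈ G ∧ ∃ v : En n,
    (∀ x ∈ (V : Set (En n)), γ x = x + v) ∧ ‖v‖ ≤ r}.ncard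

/-- `Λ_G(r)`: the number of distinct orthogonal parts `ort γ` over `γ ∈ G` with
`|tran γ| ≤ r`. -/
def LamCount {n : ℕ} (G : Subgroup (Isom n)) (r : ℝ) : ℕ :=
  {f : En n → En n | ∃ γ, γ ∈ G ∧ ‖tran γ‖ ≤ r ∧ f = ort γ}.ncard

/-- `Λ_G^V(r)`: the number of distinct orthogonal parts `ort γ` over `γ ∈ G` with
`|tran_V γ| ≤ r`. -/
def LamVCount {n : ℕ} (G : Subgroup (Isom n)) (V : AffineSubspace ℝ (En n)) (r : ℝ) : ℕ :=
  {f : En n → En n | ∃ γ, γ ∈ G ∧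
    (∃ v : En n, (∀ x ∈ (V : Set (En n)), γ x = x + v) ∧ ‖v‖ ≤ r) ∧ f = ort γ}.ncard

/-! A subgroup `H` that preserves `V'` and acts cocompactly on `V` keeps `V` within bounded
distance of `V'`: move `x ∈ V` into the compact set `K` by some `h ∈ H`, and compare `x` with
`h⁻¹ q` for a fixed `q ∈ V'`. An affine subspace within bounded distance of another has its
direction inside the other's, since along a line `p + t • u` the image of `t • u` in the
quotient by that direction grows linearly in `t` unless it vanishes. For `H = G ⊓ G'`, of finite
index in both `G` and `G'`, this gives `V.direction = V'.direction`, so `V'` is a translate of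
`V`. -/

section IsometryGroup

variable {X : Type*} [PseudoMetricSpace X]

def IsCocompactOn (H : Subgroup (X ≃ᵢ X)) (S : Set X) : Prop :=
  ∃ K : Set X, IsCompact K ∧ ∀ x ∈ S, ∃ h ∈ H, h x ∈ K

theorem IsCocompactOn.of_relIndex_ne_zero {G H : Subgroup (X ≃ᵢ X)} {S : Set X}
    (hG : IsCocompactOn G S) (hH : H.relIndex G ≠ 0) : IsCocompactOn H S := by
  obtain ⟨K, hK, hcover⟩ := hG
  have : Finite (G ⧸ H.subgroupOf G) := Nat.finite_of_card_ne_zero hH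
  refine ⟨⋃ c : G ⧸ H.subgroupOf G, ⇑(c.out : X ≃ᵢ X)⁻¹ '' K,
    isCompact_iUnion fun c => hK.image (IsometryEquiv.continuous _), fun x hx => ?_⟩
  obtain ⟨g, hg, hgx⟩ := hcover x hx
  set c : G ⧸ H.subgroupOf G := QuotientGroup.mk ⟨g, hg⟩
  have hmem : c.out⁻¹ * ⟨g, hg⟩ ∈ H.subgroupOf G := QuotientGroup.eq.mp (QuotientGroup.out_eq' c)
  exact ⟨(c.out : X ≃ᵢ X)⁻¹ * g, Subgroup.mem_subgroupOf.mp hmem,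
    Set.mem_iUnion.mpr ⟨c, g x, hgx, rfl⟩⟩

theorem IsCocompactOn.exists_forall_exists_dist_le {H : Subgroup (X ≃ᵢ X)} {S T : Set X}
    (hS : IsCocompactOn H S) (hT : ∀ h ∈ H, ∀ y ∈ T, h y ∈ T) (hTne : T.Nonempty) :
    ∃ C : ℝ, ∀ x ∈ S, ∃ y ∈ T, dist x y ≤ C := by
  obtain ⟨K, hK, hcover⟩ := hS
  obtain ⟨q, hq⟩ := hTne
  obtain ⟨R, hR⟩ := hK.isBounded.subset_closedBall q
  refine ⟨R, fun x hx => ?_⟩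
  obtain ⟨h, hh, hhx⟩ := hcover x hx
  refine ⟨h⁻¹ q, hT _ (inv_mem hh) q hq, ?_⟩
  calc dist x (h⁻¹ q) = dist (h x) q := by rw [← h.dist_eq, IsometryEquiv.apply_inv_self]
    _ ≤ R := hR hhx

end IsometryGroup

theorem norm_eq_zero_of_forall_norm_smul_le {E : Type*} [SeminormedAddCommGroup E]
    [NormedSpace ℝ E] {w : E} {C : ℝ} (h : ∀ t : ℝ, ‖t • w‖ ≤ C) : ‖w‖ = 0 := by
  by_contra hw
  have hpos : 0 < ‖w‖ := (norm_nonneg w).lt_of_ne' hw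
  have h0 : 0 ≤ C := (norm_nonneg _).trans (h 0)
  have := h ((C + 1) / ‖w‖)
  rw [norm_smul, Real.norm_of_nonneg (by positivity), div_mul_cancel₀ _ hpos.ne'] at this
  linarith

theorem AffineSubspace.direction_le_of_forall_exists_dist_le {E P : Type*}
    [NormedAddCommGroup E] [NormedSpace ℝ E] [MetricSpace P] [NormedAddTorsor E P]
    {s t : AffineSubspace ℝ P} (ht : IsClosed (t.direction : Set E)) {C : ℝ}
    (hC : ∀ x ∈ s, ∃ y ∈ t, dist x y ≤ C) : s.direction ≤ t.direction := by
  rcases (s : Set P).eq_empty_or_nonempty with hs | ⟨p, hp⟩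
  · simp [(s.coe_eq_bot_iff).mp hs]
  intro u hu
  obtain ⟨q, hq, -⟩ := hC p hp
  let π := t.direction.mkQ
  have hbound : ∀ r : ℝ, ‖r • π u‖ ≤ C + ‖q -ᵥ p‖ := by
    intro r
    obtain ⟨y, hy, hdist⟩ :=
      hC (r • u +ᵥ p) (s.vadd_mem_of_mem_direction (s.direction.smul_mem r hu) hp)
    obtain ⟨w, hw⟩ : ∃ w, w = (r • u +ᵥ p) -ᵥ y := ⟨_, rfl⟩
    have hyq : π (y -ᵥ q) = 0 := (Submodule.Quotient.mk_eq_zero _).mpr (t.vsub_mem_direction hy hq)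
    have hsplit : r • u = w + (y -ᵥ q) + (q -ᵥ p) := by
      rw [hw, add_assoc, vsub_add_vsub_cancel, vsub_add_vsub_cancel, vadd_vsub]
    calc ‖r • π u‖ = ‖π w + π (q -ᵥ p)‖ := by
          rw [← map_smul, hsplit, map_add, map_add, hyq, add_zero]
      _ ≤ ‖w‖ + ‖q -ᵥ p‖ :=
          (norm_add_le _ _).trans (add_le_add (Submodule.Quotient.norm_mk_le _ _)
            (Submodule.Quotient.norm_mk_le _ _))
      _ ≤ C + ‖q -ᵥ p‖ := by rw [hw, ← dist_eq_norm_vsub E]; gcongr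
  have hzero := norm_eq_zero_of_forall_norm_smul_le hbound
  exact ht.closure_subset (QuotientAddGroup.norm_mk_eq_zero_iff_mem_closure.mp hzero)

namespace IsCocompactTranslationPair

variable {n : ℕ} {Γ G G' : Subgroup (Isom n)} {V V' : AffineSubspace ℝ (En n)}

theorem isCocompactOn (hpair : IsCocompactTranslationPair Γ G V) : IsCocompactOn G V :=
  let ⟨K, hK, _, hcover⟩ := hpair.cocompact
  ⟨K, hK, hcover⟩

theorem direction_le (hpair : IsCocompactTranslationPair Γ G V)
    (hpair' : IsCocompactTranslationPair Γ G' V') (hfin' : G'.relIndex Γ ≠ 0) :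
    V.direction ≤ V'.direction := by
  have hindex : (G' ⊓ G).relIndex G ≠ 0 := by
    rw [Subgroup.inf_relIndex_right]
    exact mt (Subgroup.relIndex_eq_zero_of_le_right hpair.le) hfin'
  obtain ⟨C, hC⟩ := (hpair.isCocompactOn.of_relIndex_ne_zero hindex).exists_forall_exists_dist_le
    (fun h hh => hpair'.invariant h (Subgroup.mem_inf.mp hh).1) hpair'.nonempty
  exact AffineSubspace.direction_le_of_forall_exists_dist_le
    V'.direction.closed_of_finiteDimensional hC

end IsCocompactTranslationPair

open scoped Pointwise

theorem finite_index_pairs_parallel_general {n : ℕ} (Γ G G' : Subgroup (Isom n))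
    (V V' : AffineSubspace ℝ (En n))
    (hpair : IsCocompactTranslationPair Γ G V) (hfin : G.relIndex Γ ≠ 0)
    (hpair' : IsCocompactTranslationPair Γ G' V') (hfin' : G'.relIndex Γ ≠ 0) :
    ∃ a : En n, (V' : Set (En n)) = (fun x => x + a) '' (V : Set (En n)) := by
  obtain ⟨p, hp⟩ := hpair.nonempty
  obtain ⟨q, hq⟩ := hpair'.nonempty
  have hdir : ((q - p) +ᵥ V).direction = V'.direction := by
    rw [AffineSubspace.pointwise_vadd_direction]
    exact le_antisymm (hpair.direction_le hpair' hfin') (hpair'.direction_le hpair hfin)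
  have hq' : q ∈ (q - p) +ᵥ V := by
    simpa using AffineSubspace.vadd_mem_pointwise_vadd_iff (v := q - p).mpr hp
  refine ⟨q - p, ?_⟩
  rw [← AffineSubspace.ext_of_direction_eq hdir ⟨q, hq', hq⟩, AffineSubspace.coe_pointwise_vadd,
    ← Set.image_vadd]
  simp only [vadd_eq_add, add_comm]

/-- If `(G, V)` and `(G', V')` are both finite index cocompact translation
pairs of a discrete `Γ ≤ E(n)`, then `V' = V + a` for some `a ∈ ℝⁿ`. -/
theorem finite_index_pairs_parallel {n : ℕ} (Γ G G' : Subgroup (Isom n))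
    (V V' : AffineSubspace ℝ (En n)) (hΓ : IsDiscreteSubgroup Γ)
    (hpair : IsCocompactTranslationPair Γ G V) (hfin : G.relIndex Γ ≠ 0)
    (hpair' : IsCocompactTranslationPair Γ G' V') (hfin' : G'.relIndex Γ ≠ 0) :
    ∃ a : En n, (V' : Set (En n)) = (fun x => x + a) '' (V : Set (En n)) :=
  finite_index_pairs_parallel_general Γ G G' V V' hpair hfin hpair' hfin'
end
end

section
/- Let Γ be a discrete subgroup of E(n) and let G be a subgroup of Γ of finite index m. Then there exists a constant C ≥ 0 such that for all r ≥ 0: N_G(r) ≤ N_Γ(r) ≤ m·N_G(r + C). -/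
open Metric Filter MeasureTheory Asymptotics

noncomputable section

/-! By Mazur–Ulam an isometry `γ` is determined by its affine coordinates `(γ 0, L)`, `L` linear.
If `Γ` is discrete, distinct elements of `Γ` are uniformly separated in these coordinates, and
those with `‖tran γ‖ ≤ r` have coordinates in a compact ball, so there are finitely many.
For the upper bound write each `γ ∈ Γ` as `ρ g` with `g ∈ G` and `ρ` one of `m` fixed coset
representatives; then `γ ↦ (ρ, g)` is injective and `‖tran g‖ ≤ ‖tran γ‖ + ‖tran ρ‖`. -/

theorem TotallyBounded.finite_of_pairwise_le_dist {α : Type*} [PseudoMetricSpace α] {s : Set α}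
    (hs : TotallyBounded s) {δ : ℝ} (hδ : 0 < δ) (hsep : s.Pairwise fun x y => δ ≤ dist x y) :
    s.Finite := by
  obtain ⟨t, ht, hcover⟩ := Metric.totallyBounded_iff.1 hs (δ / 2) (half_pos hδ)
  have hsub : s ⊆ ⋃ y ∈ t, s ∩ ball y (δ / 2) := by
    rw [← Set.inter_iUnion₂]; exact Set.subset_inter le_rfl hcover
  refine (ht.biUnion fun y _ => Set.Subsingleton.finite ?_).subset hsub
  rintro a ⟨ha, hay⟩ b ⟨hb, hby⟩
  by_contra hab
  have := dist_triangle_right a b y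
  have := hsep ha hb hab
  rw [mem_ball] at hay hby
  linarith

namespace IsometryEquiv

variable {E : Type*} [NormedAddCommGroup E] [NormedSpace ℝ E]

def affineCoords (γ : E ≃ᵢ E) : E × (E →L[ℝ] E) :=
  (γ 0, γ.toRealLinearIsometryEquiv.toLinearIsometry.toContinuousLinearMap)

theorem norm_affineCoords_le (γ : E ≃ᵢ E) : ‖γ.affineCoords‖ ≤ max ‖γ 0‖ 1 :=
  max_le_max le_rfl (LinearIsometry.norm_toContinuousLinearMap_le _)

theorem dist_apply_le_dist_affineCoords (γ γ' : E ≃ᵢ E) (x : E) :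
    dist (γ x) (γ' x) ≤ (‖x‖ + 1) * dist γ.affineCoords γ'.affineCoords := by
  set L := γ.toRealLinearIsometryEquiv.toLinearIsometry.toContinuousLinearMap
  set L' := γ'.toRealLinearIsometryEquiv.toLinearIsometry.toContinuousLinearMap
  have hγ : γ x = L x + γ 0 := by simp [L]
  have hγ' : γ' x = L' x + γ' 0 := by simp [L']
  have hL : ‖L - L'‖ ≤ dist γ.affineCoords γ'.affineCoords := by
    rw [← dist_eq_norm]; exact le_max_right _ _
  have h0 : dist (γ 0) (γ' 0) ≤ dist γ.affineCoords γ'.affineCoords := le_max_left _ _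
  calc dist (γ x) (γ' x) = ‖(L - L') x + (γ 0 - γ' 0)‖ := by
        rw [dist_eq_norm, hγ, hγ']; congr 1; simp only [sub_apply]; abel
    _ ≤ ‖L - L'‖ * ‖x‖ + dist (γ 0) (γ' 0) :=
        (norm_add_le _ _).trans (add_le_add ((L - L').le_opNorm x) (dist_eq_norm _ _).ge)
    _ ≤ (‖x‖ + 1) * dist γ.affineCoords γ'.affineCoords := by
        nlinarith [norm_nonneg x, norm_nonneg (L - L')]

end IsometryEquiv

namespace IsDiscreteSubgroup

variable {n : ℕ} {Γ : Subgroup (Isom n)}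

theorem pairwise_le_dist_affineCoords (hΓ : IsDiscreteSubgroup Γ) :
    ∃ δ > 0, (Γ : Set (Isom n)).Pairwise fun γ γ' =>
      δ ≤ dist γ.affineCoords γ'.affineCoords := by
  obtain ⟨ε, hε, hsep⟩ := hΓ
  refine ⟨ε / 2, half_pos hε, fun γ hγ γ' hγ' hne => ?_⟩
  obtain ⟨x, hx, hεx⟩ := hsep (γ'⁻¹ * γ) (mul_mem (inv_mem hγ') hγ)
    (fun h => hne (inv_mul_eq_one.1 h).symm)
  have hγx : dist ((γ'⁻¹ * γ) x) x = dist (γ x) (γ' x) := by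
    rw [← γ'.dist_eq, IsometryEquiv.mul_apply, IsometryEquiv.apply_inv_self]
  have := γ.dist_apply_le_dist_affineCoords γ' x
  nlinarith [dist_nonneg (x := γ.affineCoords) (y := γ'.affineCoords)]

theorem finite_setOf_norm_tran_le (hΓ : IsDiscreteSubgroup Γ) (r : ℝ) :
    {γ | γ ∈ Γ ∧ ‖tran γ‖ ≤ r}.Finite := by
  obtain ⟨δ, hδ, hsep⟩ := hΓ.pairwise_le_dist_affineCoords
  have hinj : Set.InjOn IsometryEquiv.affineCoords (Γ : Set (Isom n)) :=
    fun γ hγ γ' hγ' h => by_contra fun hne => by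
      have : δ ≤ _ := hsep hγ hγ' hne; rw [h, dist_self] at this; linarith
  have hbdd :
      IsometryEquiv.affineCoords '' {γ | γ ∈ Γ ∧ ‖tran γ‖ ≤ r} ⊆ closedBall 0 (max r 1) := by
    rintro _ ⟨γ, ⟨-, hγ⟩, rfl⟩
    rw [mem_closedBall_zero_iff]
    exact γ.norm_affineCoords_le.trans (max_le_max hγ le_rfl)
  refine Set.Finite.of_finite_image ?_ (hinj.mono fun γ hγ => hγ.1)
  refine ((isCompact_closedBall _ _).totallyBounded.subset hbdd).finite_of_pairwise_le_dist hδ ?_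
  rintro _ ⟨γ, hγ, rfl⟩ _ ⟨γ', hγ', rfl⟩ hne
  exact hsep hγ.1 hγ'.1 fun h => hne (congrArg _ h)

end IsDiscreteSubgroup

theorem norm_tran_inv_mul_le {n : ℕ} (a b : Isom n) : ‖tran (a⁻¹ * b)‖ ≤ ‖tran a‖ + ‖tran b‖ :=
  calc ‖tran (a⁻¹ * b)‖ = dist (b 0) (a 0) := by
        rw [← dist_zero_right, ← a.dist_eq, tran, IsometryEquiv.mul_apply,
          IsometryEquiv.apply_inv_self]
    _ ≤ ‖tran a‖ + ‖tran b‖ := (dist_le_norm_add_norm _ _).trans_eq (add_comm _ _)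

namespace Subgroup

variable {G : Type*} [Group G]

theorem exists_ncard_le_index_mul_ncard (H : Subgroup G) [H.FiniteIndex] (ℓ : G → ℝ)
    (hℓ : ∀ a b, ℓ (a⁻¹ * b) ≤ ℓ a + ℓ b) :
    ∃ C, 0 ≤ C ∧ ∀ r, {h | h ∈ H ∧ ℓ h ≤ r + C}.Finite →
      {g | ℓ g ≤ r}.ncard ≤ H.index * {h | h ∈ H ∧ ℓ h ≤ r + C}.ncard := by
  obtain ⟨C, hC⟩ := Finite.exists_le fun q : G ⧸ H => ℓ q.out
  refine ⟨max C 0, le_max_right _ _, fun r hfin => ?_⟩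
  let f : G → (G ⧸ H) × G := fun g => (g, (g : G ⧸ H).out⁻¹ * g)
  have hf : f.Injective := by
    rintro g g' h
    obtain ⟨hq, hg⟩ := Prod.mk.inj h
    rw [hq] at hg
    exact mul_left_cancel hg
  have hmaps : ∀ g ∈ {g | ℓ g ≤ r},
      f g ∈ (Set.univ : Set (G ⧸ H)) ×ˢ {h | h ∈ H ∧ ℓ h ≤ r + max C 0} := by
    intro g hg
    refine ⟨trivial, QuotientGroup.eq.1 (QuotientGroup.out_eq' _), ?_⟩
    linarith [hℓ (g : G ⧸ H).out g, hC g, le_max_left C 0, show ℓ g ≤ r from hg]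
  calc {g | ℓ g ≤ r}.ncard
      ≤ ((Set.univ : Set (G ⧸ H)) ×ˢ {h | h ∈ H ∧ ℓ h ≤ r + max C 0}).ncard :=
        Set.ncard_le_ncard_of_injOn f hmaps hf.injOn (Set.finite_univ.prod hfin)
    _ = H.index * {h | h ∈ H ∧ ℓ h ≤ r + max C 0}.ncard := by
        rw [Set.ncard_prod, Set.ncard_univ, index_eq_card]

theorem exists_ncard_le_relIndex_mul_ncard {H K : Subgroup G} (hHK : H.relIndex K ≠ 0)
    (ℓ : G → ℝ) (hℓ : ∀ a b, ℓ (a⁻¹ * b) ≤ ℓ a + ℓ b) :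
    ∃ C, 0 ≤ C ∧ ∀ r, {h | h ∈ H ∧ ℓ h ≤ r + C}.Finite →
      {g | g ∈ K ∧ ℓ g ≤ r}.ncard ≤ H.relIndex K * {h | h ∈ H ∧ ℓ h ≤ r + C}.ncard := by
  have : (H.subgroupOf K).FiniteIndex := ⟨hHK⟩
  obtain ⟨C, hC, hcount⟩ :=
    (H.subgroupOf K).exists_ncard_le_index_mul_ncard (fun g => ℓ g) fun a b => hℓ a b
  refine ⟨C, hC, fun r hfin => ?_⟩
  have hK (s : Set G) : {g : K | (g : G) ∈ s}.ncard = {g | g ∈ K ∧ g ∈ s}.ncard := by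
    rw [Set.ncard_subtype]; congr 1; ext; simp [and_comm]
  calc {g | g ∈ K ∧ ℓ g ≤ r}.ncard = {g : K | ℓ g ≤ r}.ncard := (hK {g | ℓ g ≤ r}).symm
    _ ≤ H.relIndex K * {h : K | h ∈ H.subgroupOf K ∧ ℓ h ≤ r + C}.ncard :=
        hcount r (hfin.preimage Subtype.val_injective.injOn)
    _ = H.relIndex K * {g | g ∈ K ∧ g ∈ {h | h ∈ H ∧ ℓ h ≤ r + C}}.ncard :=
        congrArg (H.relIndex K * ·) (hK {h | h ∈ H ∧ ℓ h ≤ r + C})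
    _ ≤ H.relIndex K * {h | h ∈ H ∧ ℓ h ≤ r + C}.ncard :=
        Nat.mul_le_mul_left _ (Set.ncard_le_ncard (fun _ h => h.2) hfin)

end Subgroup

/-- If `G ≤ Γ` is of finite index `m` in a discrete `Γ ≤ E(n)`, then there
is `C ≥ 0` with `N_G(r) ≤ N_Γ(r) ≤ m · N_G(r + C)` for all `r ≥ 0`. -/
theorem counting_comparison_finite_index {n : ℕ} (Γ G : Subgroup (Isom n)) (m : ℕ)
    (hΓ : IsDiscreteSubgroup Γ) (hle : G ≤ Γ)
    (hm : G.relIndex Γ = m) (hm0 : m ≠ 0) :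
    ∃ C : ℝ, 0 ≤ C ∧ ∀ r : ℝ, 0 ≤ r →
      NCount G r ≤ NCount Γ r ∧ NCount Γ r ≤ m * NCount G (r + C) := by
  obtain ⟨C, hC, hcount⟩ := Subgroup.exists_ncard_le_relIndex_mul_ncard (hm ▸ hm0)
    (fun γ => ‖tran γ‖) norm_tran_inv_mul_le
  have hsub : ∀ s, {γ | γ ∈ G ∧ ‖tran γ‖ ≤ s} ⊆ {γ | γ ∈ Γ ∧ ‖tran γ‖ ≤ s} :=
    fun _ _ hγ => ⟨hle hγ.1, hγ.2⟩
  refine ⟨C, hC, fun r _ => ⟨?_, ?_⟩⟩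
  · exact Set.ncard_le_ncard (hsub r) (hΓ.finite_setOf_norm_tran_le r)
  · exact hm ▸ hcount r ((hΓ.finite_setOf_norm_tran_le (r + C)).subset (hsub (r + C)))
end
end

section
/- Let Γ be a discrete subgroup of E(n), and let (G, V) be a finite index cocompact translation pair of Γ. Then for every γ ∈ G one has |tran_V(γ)| ≤ |tran(γ)| ≤ |tran_V(γ)| + 2·d(0, V), and consequently for all r ≥ 0: N_G^V(r − 2·d(0,V)) ≤ N_G(r) ≤ N_G^V(r). -/
/-!
On `V` the powers of `γ` act as `x ↦ x + k • tran_V γ`, while `γ^k` moves `0` by at most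
`k ‖tran γ‖`; since `γ^k` is an isometry, comparing the two for large `k` gives
`‖tran_V γ‖ ≤ ‖tran γ‖`. Conversely `‖γ 0‖ ≤ ‖γ 0 - γ x‖ + ‖γ x - x‖ + ‖x‖ = 2 ‖x‖ + ‖tran_V γ‖`
for every `x ∈ V`. Both inequalities give inclusions between the sets counted by `NCount` and
`NVCount`; as `Set.ncard` is `0` on infinite sets, these sets must also be shown finite. For a
discrete `Γ` the elements with `‖tran γ‖ ≤ r` have linear and translation parts in a compact set,
in which they are uniformly separated.
-/

open Metric Filter MeasureTheory Asymptotics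

noncomputable section

open scoped NNReal ENNReal

theorem le_of_forall_nat_mul_le_add_nat_mul {a b C : ℝ} (h : ∀ k : ℕ, k * a ≤ C + k * b) :
    a ≤ b := by
  by_contra! hba
  obtain ⟨k, hk⟩ := exists_nat_gt (C / (a - b))
  have := h k
  rw [div_lt_iff₀ (sub_pos.2 hba)] at hk
  linarith

theorem TotallyBounded.finite_of_isSeparated {X : Type*} [PseudoEMetricSpace X] {s : Set X}
    (hs : TotallyBounded s) {ε : ℝ≥0} (hε : ε ≠ 0) (hsep : IsSeparated ε s) : s.Finite := by
  obtain ⟨N, -, hNfin, hN⟩ := exists_finite_isCover_of_totallyBounded (half_pos hε.bot_lt).ne' hs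
  rw [← Set.encard_lt_top_iff]
  calc s.encard ≤ packingNumber (2 * (ε / 2)) s := by
        rw [mul_div_cancel₀ _ two_ne_zero]; exact hsep.encard_le_packingNumber subset_rfl
    _ ≤ externalCoveringNumber (ε / 2) s := packingNumber_two_mul_le_externalCoveringNumber _ _
    _ ≤ N.encard := hN.externalCoveringNumber_le_encard
    _ < ⊤ := hNfin.encard_lt_top

namespace Isometry

variable {α : Type*} [PseudoMetricSpace α]

theorem iterate {f : α → α} (hf : Isometry f) : ∀ k : ℕ, Isometry f^[k]
  | 0 => isometry_id
  | k + 1 => (hf.iterate k).comp hf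

theorem dist_iterate_le {f : α → α} (hf : Isometry f) (z : α) (k : ℕ) :
    dist (f^[k] z) z ≤ k * dist (f z) z := by
  induction k with
  | zero => simp
  | succ k ih =>
    calc dist (f^[k + 1] z) z ≤ dist (f^[k] (f z)) (f^[k] z) + dist (f^[k] z) z := by
          rw [Function.iterate_succ_apply]; exact dist_triangle _ _ _
      _ ≤ (k + 1 : ℕ) * dist (f z) z := by
          rw [(hf.iterate k).dist_eq]; push_cast; linarith

theorem dist_apply_le_add_two_mul_infDist {f : α → α} (hf : Isometry f) {s : Set α}
    (hne : s.Nonempty) {c : ℝ} (hc : ∀ y ∈ s, dist (f y) y ≤ c) (z : α) :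
    dist (f z) z ≤ c + 2 * infDist z s := by
  have : (dist (f z) z - c) / 2 ≤ infDist z s := by
    refine (le_infDist hne).2 fun y hy => ?_
    have := dist_triangle4 (f z) (f y) y z
    rw [hf.dist_eq, dist_comm y z] at this
    linarith [hc y hy]
  linarith

theorem norm_le_dist_apply_of_translate {E : Type*} [NormedAddCommGroup E] [NormedSpace ℝ E]
    {f : E → E} (hf : Isometry f) {s : Set E} (hs : Set.MapsTo f s s) {x v : E} (hx : x ∈ s)
    (hv : ∀ y ∈ s, f y = y + v) (z : E) :
    ‖v‖ ≤ dist (f z) z := by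
  have iterate_eq : ∀ k : ℕ, f^[k] x = x + k • v := by
    intro k
    induction k with
    | zero => simp
    | succ k ih =>
      rw [Function.iterate_succ_apply', hv _ (hs.iterate k hx), ih, succ_nsmul, add_assoc]
  refine le_of_forall_nat_mul_le_add_nat_mul (C := 2 * dist x z) fun k => ?_
  calc (k : ℝ) * ‖v‖ = dist (f^[k] x) x := by
        rw [iterate_eq, dist_eq_norm, add_sub_cancel_left, ← Nat.cast_smul_eq_nsmul ℝ, norm_smul,
          Real.norm_natCast]
    _ ≤ dist (f^[k] x) (f^[k] z) + dist (f^[k] z) z + dist z x := dist_triangle4 _ _ _ _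
    _ ≤ 2 * dist x z + k * dist (f z) z := by
        rw [(hf.iterate k).dist_eq, dist_comm z x]
        linarith [hf.dist_iterate_le z k]

end Isometry

namespace IsometryEquiv

variable {E : Type*} [NormedAddCommGroup E] [NormedSpace ℝ E]

def linearPartTranslation (γ : E ≃ᵢ E) : (E →L[ℝ] E) × E :=
  (γ.toRealLinearIsometryEquiv.toLinearIsometry.toContinuousLinearMap, γ 0)

theorem apply_eq_linearPartTranslation_add (γ : E ≃ᵢ E) (x : E) :
    γ x = (linearPartTranslation γ).1 x + (linearPartTranslation γ).2 := by
  simp [linearPartTranslation]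

theorem linearPartTranslation_injective :
    Function.Injective (linearPartTranslation (E := E)) := by
  intro γ δ h
  ext x
  rw [apply_eq_linearPartTranslation_add, apply_eq_linearPartTranslation_add, h]

theorem norm_linearPartTranslation_le (γ : E ≃ᵢ E) :
    ‖linearPartTranslation γ‖ ≤ max 1 ‖γ 0‖ :=
  norm_prod_le_iff.2 ⟨(LinearIsometry.norm_toContinuousLinearMap_le _).trans (le_max_left _ _),
    le_max_right _ _⟩

theorem dist_apply_le_two_mul_dist_linearPartTranslation (γ δ : E ≃ᵢ E) {x : E} (hx : ‖x‖ ≤ 1) :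
    dist (γ x) (δ x) ≤ 2 * dist (linearPartTranslation γ) (linearPartTranslation δ) := by
  set p := linearPartTranslation γ
  set q := linearPartTranslation δ
  have hlin : ‖p.1 x - q.1 x‖ ≤ dist p q := calc
    ‖p.1 x - q.1 x‖ = ‖(p.1 - q.1) x‖ := rfl
    _ ≤ ‖p.1 - q.1‖ * ‖x‖ := (p.1 - q.1).le_opNorm x
    _ ≤ ‖p.1 - q.1‖ := mul_le_of_le_one_right (norm_nonneg _) hx
    _ ≤ dist p q := by rw [← dist_eq_norm, Prod.dist_eq]; exact le_max_left _ _
  have htran : ‖p.2 - q.2‖ ≤ dist p q := by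
    rw [← dist_eq_norm, Prod.dist_eq]; exact le_max_right _ _
  calc dist (γ x) (δ x) = ‖(p.1 x - q.1 x) + (p.2 - q.2)‖ := by
        rw [dist_eq_norm, apply_eq_linearPartTranslation_add, apply_eq_linearPartTranslation_add]
        congr 1; abel
    _ ≤ 2 * dist p q := by linarith [norm_add_le (p.1 x - q.1 x) (p.2 - q.2)]

theorem finite_of_pairwise_separated [FiniteDimensional ℝ E] {S : Set (E ≃ᵢ E)} {ε r : ℝ}
    (hε : 0 < ε) (hr : ∀ γ ∈ S, ‖γ 0‖ ≤ r)
    (hsep : S.Pairwise fun γ δ => ∃ x, ‖x‖ ≤ 1 ∧ ε ≤ dist (γ x) (δ x)) : S.Finite := by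
  refine Set.Finite.of_finite_image ?_ linearPartTranslation_injective.injOn
  have hbdd : linearPartTranslation '' S ⊆ closedBall 0 (max 1 r) := by
    rintro _ ⟨γ, hγ, rfl⟩
    exact mem_closedBall_zero_iff.2 ((norm_linearPartTranslation_le γ).trans
      (max_le_max le_rfl (hr γ hγ)))
  refine ((isCompact_closedBall _ _).totallyBounded.subset hbdd).finite_of_isSeparated
    (ε := (ε / 4).toNNReal) (Real.toNNReal_pos.2 (by positivity)).ne' ?_
  rintro _ ⟨γ, hγ, rfl⟩ _ ⟨δ, hδ, rfl⟩ hne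
  obtain ⟨x, hx, hεx⟩ := hsep hγ hδ (ne_of_apply_ne _ hne)
  have := dist_apply_le_two_mul_dist_linearPartTranslation γ δ hx
  rw [edist_dist]
  exact (ENNReal.ofReal_lt_ofReal_iff (by linarith)).2 (by linarith)

end IsometryEquiv

theorem IsDiscreteSubgroup.finite_setOf_norm_tran_le_s4 {n : ℕ} {Γ : Subgroup (Isom n)}
    (hΓ : IsDiscreteSubgroup Γ) (r : ℝ) : {γ : Isom n | γ ∈ Γ ∧ ‖tran γ‖ ≤ r}.Finite := by
  obtain ⟨ε, hε, hsep⟩ := hΓ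
  refine IsometryEquiv.finite_of_pairwise_separated hε (fun γ hγ => hγ.2) ?_
  intro γ hγ δ hδ hne
  obtain ⟨x, hx, hεx⟩ :=
    hsep (δ⁻¹ * γ) (mul_mem (inv_mem hδ.1) hγ.1) (mt inv_mul_eq_one.mp hne.symm)
  refine ⟨x, hx, ?_⟩
  rwa [IsometryEquiv.mul_apply, ← δ.dist_eq, IsometryEquiv.apply_inv_self] at hεx

theorem dist_apply_zero_eq_norm_tran {n : ℕ} (γ : Isom n) : dist (γ 0) 0 = ‖tran γ‖ :=
  dist_zero_right _

theorem tranV_tran_comparison_general {n : ℕ} (Γ G : Subgroup (Isom n))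
    (V : AffineSubspace ℝ (En n)) (hΓ : IsDiscreteSubgroup Γ)
    (hpair : IsCocompactTranslationPair Γ G V) :
    (∀ γ ∈ G, ∀ v : En n, (∀ x ∈ (V : Set (En n)), γ x = x + v) →
      ‖v‖ ≤ ‖tran γ‖ ∧ ‖tran γ‖ ≤ ‖v‖ + 2 * Metric.infDist 0 (V : Set (En n))) ∧
    (∀ r : ℝ, 0 ≤ r →
      NVCount G V (r - 2 * Metric.infDist 0 (V : Set (En n))) ≤ NCount G r ∧
      NCount G r ≤ NVCount G V r) := by
  obtain ⟨x₀, hx₀⟩ := hpair.nonempty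
  set d := infDist 0 (V : Set (En n))
  have bounds : ∀ γ ∈ G, ∀ v : En n, (∀ x ∈ (V : Set (En n)), γ x = x + v) →
      ‖v‖ ≤ ‖tran γ‖ ∧ ‖tran γ‖ ≤ ‖v‖ + 2 * d := by
    intro γ hγ v hv
    rw [← dist_apply_zero_eq_norm_tran]
    refine ⟨γ.isometry.norm_le_dist_apply_of_translate (hpair.invariant γ hγ) hx₀ hv 0,
      γ.isometry.dist_apply_le_add_two_mul_infDist hpair.nonempty (fun y hy => ?_) 0⟩
    rw [hv y hy, dist_self_add_left]
  have finite_tran_le (t : ℝ) : {γ : Isom n | γ ∈ G ∧ ‖tran γ‖ ≤ t}.Finite :=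
    (hΓ.finite_setOf_norm_tran_le_s4 t).subset fun γ hγ => ⟨hpair.le hγ.1, hγ.2⟩
  refine ⟨bounds, fun r _ => ⟨?_, ?_⟩⟩
  · refine Set.ncard_le_ncard (fun γ ⟨hγ, v, hv, hvr⟩ => ⟨hγ, ?_⟩) (finite_tran_le r)
    linarith [(bounds γ hγ v hv).2]
  · refine Set.ncard_le_ncard (fun γ ⟨hγ, hγr⟩ => ?_) ((finite_tran_le (r + 2 * d)).subset ?_)
    · obtain ⟨v, hv⟩ := hpair.translation γ hγ
      exact ⟨hγ, v, hv, (bounds γ hγ v hv).1.trans hγr⟩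
    · rintro γ ⟨hγ, v, hv, hvr⟩
      exact ⟨hγ, by linarith [(bounds γ hγ v hv).2]⟩

/-- For a finite index cocompact translation pair `(G, V)` of a discrete
`Γ ≤ E(n)`: `|tran_V γ| ≤ |tran γ| ≤ |tran_V γ| + 2 d(0, V)` for all `γ ∈ G`, and
consequently `N_G^V(r − 2 d(0,V)) ≤ N_G(r) ≤ N_G^V(r)` for all `r ≥ 0`. -/
theorem tranV_tran_comparison {n : ℕ} (Γ G : Subgroup (Isom n))
    (V : AffineSubspace ℝ (En n)) (hΓ : IsDiscreteSubgroup Γ)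
    (hpair : IsCocompactTranslationPair Γ G V) (hfin : G.relIndex Γ ≠ 0) :
    (∀ γ ∈ G, ∀ v : En n, (∀ x ∈ (V : Set (En n)), γ x = x + v) →
      ‖v‖ ≤ ‖tran γ‖ ∧ ‖tran γ‖ ≤ ‖v‖ + 2 * Metric.infDist 0 (V : Set (En n))) ∧
    (∀ r : ℝ, 0 ≤ r →
      NVCount G V (r - 2 * Metric.infDist 0 (V : Set (En n))) ≤ NCount G r ∧
      NCount G r ≤ NVCount G V r) :=
  tranV_tran_comparison_general Γ G V hΓ hpair
end
end

section
/- Let Γ be a discrete subgroup of E(n) and let G be a subgroup of Γ. Then G has finite index in Γ if and only if N_G(r) = Θ(N_Γ(r)); equivalently, if and only if Γ and G have the same dimension, where the dimension of a discrete subgroup H ≤ E(n) is the unique k ∈ ℕ with N_H(r) = Θ(r^k). -/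
open Metric Filter MeasureTheory Asymptotics

noncomputable section

/-!
Discreteness makes every ball `{γ ∈ Γ | ‖tran γ‖ ≤ r}` finite: the pairs (linear part,
translation) of its elements lie in a compact set and are uniformly separated.
Since `‖tran (γ⁻¹ * δ)‖ = dist (tran γ) (tran δ)`, left multiplication by `δ` changes translation
lengths by at most `‖tran δ‖`. Hence, if coset representatives have translation length at most
`a`, then `k * N_G(r) ≤ N_Γ(r + a)` for `k` distinct cosets of `G` in `Γ`, and
`N_Γ(r) ≤ [Γ : G] * N_G(r + a)`. Covering a ball of radius `2r` in `ℝⁿ` by boundedly many balls of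
radius `r / 2` gives the doubling bound `N_G(2r) ≤ D * N_G(r)`, which absorbs the shift by `a`;
so `N_Γ = O(N_G)` bounds the number of cosets by `c * D`.
-/

theorem IsCompact.finite_of_mapsTo_of_pairwise_le_dist {α X : Type*} [PseudoMetricSpace X]
    {s : Set α} {K : Set X} {f : α → X} (hK : IsCompact K) (hf : Set.MapsTo f s K) {ε : ℝ}
    (hε : 0 < ε) (hsep : s.Pairwise fun a b => ε ≤ dist (f a) (f b)) : s.Finite := by
  refine Set.not_infinite.1 fun hs => ?_
  obtain ⟨t, -, ht, hcover⟩ := hK.finite_cover_balls (half_pos hε)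
  have hcenter : ∀ a ∈ s, ∃ c ∈ t, f a ∈ ball c (ε / 2) := fun a ha => by
    simpa using hcover (hf ha)
  have : Nonempty X := ⟨f hs.nonempty.some⟩
  choose! c hct hc using hcenter
  obtain ⟨a, ha, b, hb, hab, hcab⟩ := Set.Infinite.exists_ne_map_eq_of_mapsTo hs hct ht
  have hb' := mem_ball.1 (hc b hb)
  rw [← hcab] at hb'
  linarith [hsep ha hb hab, mem_ball.1 (hc a ha), dist_triangle_right (f a) (f b) (c a)]

theorem exists_finset_closedBall_subset_iUnion_ball {E : Type*} [NormedAddCommGroup E]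
    [NormedSpace ℝ E] [ProperSpace E] :
    ∃ t : Finset E, ∀ r > 0, closedBall (0 : E) (2 * r) ⊆ ⋃ c ∈ t, ball (r • c) (r / 2) := by
  obtain ⟨t, -, ht, hcover⟩ :=
    (isCompact_closedBall (0 : E) 2).finite_cover_balls (by norm_num : (0 : ℝ) < 1 / 2)
  refine ⟨ht.toFinset, fun r hr x hx => ?_⟩
  have hx' : r⁻¹ • x ∈ closedBall (0 : E) 2 := by
    rw [mem_closedBall_zero_iff, norm_smul, norm_inv, Real.norm_of_nonneg hr.le,
      inv_mul_le_iff₀ hr]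
    simpa [mul_comm] using mem_closedBall_zero_iff.1 hx
  obtain ⟨c, hc, hxc⟩ := Set.mem_iUnion₂.1 (hcover hx')
  refine Set.mem_iUnion₂.2 ⟨c, ht.mem_toFinset.2 hc, ?_⟩
  rw [mem_ball, ← smul_inv_smul₀ hr.ne' x, dist_smul₀, Real.norm_of_nonneg hr.le]
  linarith [mul_lt_mul_of_pos_left (mem_ball.1 hxc) hr]

namespace IsometryEquiv

variable {E : Type*} [NormedAddCommGroup E] [NormedSpace ℝ E]

theorem dist_apply_le_two_mul_dist (γ δ : E ≃ᵢ E) {x : E} (hx : ‖x‖ ≤ 1) :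
    dist (γ x) (δ x) ≤ 2 * dist ((γ.toRealLinearIsometryEquiv : E →L[ℝ] E), γ 0)
      ((δ.toRealLinearIsometryEquiv : E →L[ℝ] E), δ 0) := by
  set L : E →L[ℝ] E := ↑γ.toRealLinearIsometryEquiv
  set M : E →L[ℝ] E := ↑δ.toRealLinearIsometryEquiv
  have hsplit : γ x - δ x = (L - M) x + (γ 0 - δ 0) := by
    simp only [L, M, sub_apply, LinearIsometryEquiv.coe_coe'',
      toRealLinearIsometryEquiv_apply]
    abel
  have hLM : ‖(L - M) x‖ ≤ dist L M := by
    rw [dist_eq_norm]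
    exact ((L - M).le_opNorm x).trans (mul_le_of_le_one_right (norm_nonneg _) hx)
  calc dist (γ x) (δ x) ≤ dist L M + dist (γ 0) (δ 0) := by
        rw [dist_eq_norm, hsplit, dist_eq_norm (γ 0)]
        exact (norm_add_le _ _).trans (add_le_add_left hLM _)
    _ ≤ 2 * dist (L, γ 0) (M, δ 0) := by
        rw [Prod.dist_eq]
        linarith [le_max_left (dist L M) (dist (γ 0) (δ 0)),
          le_max_right (dist L M) (dist (γ 0) (δ 0))]

end IsometryEquiv

section Translations

variable {n : ℕ}

theorem tran_mul (γ δ : Isom n) : tran (γ * δ) = γ (tran δ) := rfl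

theorem norm_tran_inv_mul (γ δ : Isom n) : ‖tran (γ⁻¹ * δ)‖ = dist (tran γ) (tran δ) := by
  rw [tran_mul, ← dist_zero_right, ← γ.dist_eq, dist_comm]
  simp [tran]

theorem norm_tran_inv (γ : Isom n) : ‖tran γ⁻¹‖ = ‖tran γ‖ := by
  simpa [tran] using norm_tran_inv_mul γ 1

theorem norm_tran_mul_le (γ δ : Isom n) : ‖tran (γ * δ)‖ ≤ ‖tran γ‖ + ‖tran δ‖ := by
  nth_rewrite 1 [← inv_inv γ]
  rw [norm_tran_inv_mul, ← norm_tran_inv γ]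
  exact dist_le_norm_add_norm _ _

end Translations

namespace Subgroup

variable {α : Type*} [Group α] {G Γ : Subgroup α}

theorem exists_finite_forall_exists_inv_mul_mem (h : G.relIndex Γ ≠ 0) :
    ∃ T : Set α, T.Finite ∧ ∀ γ ∈ Γ, ∃ δ ∈ T, δ⁻¹ * γ ∈ G := by
  have : Finite (Γ ⧸ G.subgroupOf Γ) := (Nat.card_ne_zero.1 h).2
  refine ⟨Set.range fun q : Γ ⧸ G.subgroupOf Γ => (q.out : α), Set.finite_range _,
    fun γ hγ => ⟨_, Set.mem_range_self (QuotientGroup.mk ⟨γ, hγ⟩), ?_⟩⟩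
  obtain ⟨g, hg⟩ := QuotientGroup.mk_out_eq_mul (G.subgroupOf Γ) ⟨γ, hγ⟩
  simp only [hg, coe_mul, mul_inv_rev, inv_mul_cancel_right]
  exact inv_mem g.2

theorem exists_ncard_eq_pairwise_inv_mul_notMem (h : G.relIndex Γ = 0) (m : ℕ) :
    ∃ T : Set α, T.ncard = m ∧ T ⊆ Γ ∧ T.Pairwise fun δ δ' => δ⁻¹ * δ' ∉ G := by
  have : Infinite (Γ ⧸ G.subgroupOf Γ) := index_eq_zero_iff_infinite.1 h
  obtain ⟨s, hs⟩ := Infinite.exists_subset_card_eq (Γ ⧸ G.subgroupOf Γ) m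
  set rep : Γ ⧸ G.subgroupOf Γ → α := fun q => (q.out : α)
  have hrep : rep.Injective := Subtype.val_injective.comp Quotient.out_injective
  refine ⟨rep '' s, by rw [Set.ncard_image_of_injective _ hrep, Set.ncard_coe_finset, hs],
    Set.image_subset_iff.2 fun q _ => q.out.2, ?_⟩
  rintro _ ⟨q, -, rfl⟩ _ ⟨q', -, rfl⟩ hne hmem
  refine hne (congrArg rep ?_)
  simpa using QuotientGroup.eq.2 (show q.out⁻¹ * q'.out ∈ G.subgroupOf Γ from hmem)

end Subgroup

section Counting

variable {n : ℕ}

def tranBall (H : Subgroup (Isom n)) (r : ℝ) : Set (Isom n) := {γ | γ ∈ H ∧ ‖tran γ‖ ≤ r}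

theorem nCount_eq_ncard_tranBall (H : Subgroup (Isom n)) (r : ℝ) :
    NCount H r = (tranBall H r).ncard := rfl

theorem tranBall_mono {H K : Subgroup (Isom n)} (hHK : H ≤ K) {r s : ℝ} (hrs : r ≤ s) :
    tranBall H r ⊆ tranBall K s :=
  fun _ hγ => ⟨hHK hγ.1, hγ.2.trans hrs⟩

theorem nCount_mono {H K : Subgroup (Isom n)} (hHK : H ≤ K) {r s : ℝ} (hrs : r ≤ s)
    (hfin : (tranBall K s).Finite) : NCount H r ≤ NCount K s :=
  Set.ncard_le_ncard (tranBall_mono hHK hrs) hfin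

theorem finite_tranBall_of_le {H K : Subgroup (Isom n)} (hHK : H ≤ K)
    (hfin : ∀ r, (tranBall K r).Finite) (r : ℝ) : (tranBall H r).Finite :=
  (hfin r).subset (tranBall_mono hHK le_rfl)

theorem one_le_nCount {H : Subgroup (Isom n)} {r : ℝ} (hr : 0 ≤ r)
    (hfin : (tranBall H r).Finite) : 1 ≤ NCount H r :=
  (Set.ncard_pos hfin).2 ⟨1, one_mem H, by simpa [tran] using hr⟩

theorem IsDiscreteSubgroup.exists_le_dist_apply {Γ : Subgroup (Isom n)}
    (hΓ : IsDiscreteSubgroup Γ) :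
    ∃ ε > 0, ∀ γ ∈ Γ, ∀ δ ∈ Γ, γ ≠ δ → ∃ x : En n, ‖x‖ ≤ 1 ∧ ε ≤ dist (γ x) (δ x) := by
  obtain ⟨ε, hε, hsep⟩ := hΓ
  refine ⟨ε, hε, fun γ hγ δ hδ hne => ?_⟩
  obtain ⟨x, hx, hεx⟩ := hsep (δ⁻¹ * γ) (mul_mem (inv_mem hδ) hγ) (by
    rwa [Ne, inv_mul_eq_one, eq_comm])
  refine ⟨x, hx, hεx.trans_eq ?_⟩
  rw [IsometryEquiv.mul_apply, ← δ.dist_eq, ← IsometryEquiv.mul_apply, mul_inv_cancel]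
  rfl

theorem IsDiscreteSubgroup.finite_tranBall {Γ : Subgroup (Isom n)} (hΓ : IsDiscreteSubgroup Γ)
    (r : ℝ) : (tranBall Γ r).Finite := by
  obtain ⟨ε, hε, hsep⟩ := hΓ.exists_le_dist_apply
  refine (isCompact_closedBall 0 (max 1 r)).finite_of_mapsTo_of_pairwise_le_dist
    (f := fun γ : Isom n => ((γ.toRealLinearIsometryEquiv : En n →L[ℝ] En n), γ 0))
    ?_ (half_pos hε) ?_
  · intro γ hγ
    rw [mem_closedBall_zero_iff, Prod.norm_def]
    exact max_le_max (LinearIsometry.norm_toContinuousLinearMap_le _) hγ.2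
  · intro γ hγ δ hδ hne
    obtain ⟨x, hx, hεx⟩ := hsep γ hγ.1 δ hδ.1 hne
    linarith [γ.dist_apply_le_two_mul_dist δ hx]

theorem ncard_le_nCount_of_dist_le {H : Subgroup (Isom n)} {S : Set (Isom n)} {r : ℝ}
    (hSH : S ⊆ H) (hS : ∀ γ ∈ S, ∀ δ ∈ S, dist (tran γ) (tran δ) ≤ r)
    (hfin : (tranBall H r).Finite) : S.ncard ≤ NCount H r := by
  rcases S.eq_empty_or_nonempty with rfl | ⟨γ₀, hγ₀⟩
  · simp
  refine Set.ncard_le_ncard_of_injOn (γ₀⁻¹ * ·) (fun γ hγ => ⟨?_, ?_⟩)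
    (mul_right_injective _).injOn hfin
  · exact mul_mem (inv_mem (hSH hγ₀)) (hSH hγ)
  · exact (norm_tran_inv_mul γ₀ γ).trans_le (hS γ₀ hγ₀ γ hγ)

theorem nCount_two_mul_le (H : Subgroup (Isom n)) (hfin : ∀ r, (tranBall H r).Finite) :
    ∃ D : ℕ, ∀ r > 0, NCount H (2 * r) ≤ D * NCount H r := by
  obtain ⟨t, ht⟩ := exists_finset_closedBall_subset_iUnion_ball (E := En n)
  refine ⟨t.card, fun r hr => ?_⟩
  set piece : En n → Set (Isom n) := fun c => tranBall H (2 * r) ∩ tran ⁻¹' ball (r • c) (r / 2)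
  have hcover : tranBall H (2 * r) ⊆ ⋃ c ∈ t, piece c := fun γ hγ => by
    obtain ⟨c, hc, hγc⟩ := Set.mem_iUnion₂.1 (ht r hr (mem_closedBall_zero_iff.2 hγ.2))
    exact Set.mem_iUnion₂.2 ⟨c, hc, hγ, hγc⟩
  have hpiece : ∀ c, (piece c).ncard ≤ NCount H r := fun c =>
    ncard_le_nCount_of_dist_le (fun γ hγ => hγ.1.1) (fun γ hγ δ hδ => by
      linarith [mem_ball.1 hγ.2, mem_ball.1 hδ.2, dist_triangle_right (tran γ) (tran δ) (r • c)])
      (hfin r)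
  calc NCount H (2 * r) ≤ (⋃ c ∈ t, piece c).ncard :=
        Set.ncard_le_ncard hcover
          ((hfin _).subset (Set.iUnion₂_subset fun _ _ => Set.inter_subset_left))
    _ ≤ ∑ c ∈ t, (piece c).ncard := t.set_ncard_biUnion_le piece
    _ ≤ ∑ _c ∈ t, NCount H r := Finset.sum_le_sum fun c _ => hpiece c
    _ = t.card * NCount H r := by rw [Finset.sum_const, smul_eq_mul]

theorem nCount_le_ncard_mul_nCount {Γ G : Subgroup (Isom n)} {T : Set (Isom n)} (hT : T.Finite)
    (hcover : ∀ γ ∈ Γ, ∃ δ ∈ T, δ⁻¹ * γ ∈ G) {a : ℝ} (ha : ∀ δ ∈ T, ‖tran δ‖ ≤ a) {r : ℝ}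
    (hfin : (tranBall G (r + a)).Finite) : NCount Γ r ≤ T.ncard * NCount G (r + a) := by
  have hsub : tranBall Γ r ⊆ Set.image2 (· * ·) T (tranBall G (r + a)) := by
    rintro γ ⟨hγ, hγr⟩
    obtain ⟨δ, hδ, hδγ⟩ := hcover γ hγ
    refine ⟨δ, hδ, δ⁻¹ * γ, ⟨hδγ, ?_⟩, mul_inv_cancel_left δ γ⟩
    linarith [norm_tran_mul_le δ⁻¹ γ, norm_tran_inv δ, ha δ hδ]
  calc NCount Γ r ≤ (Set.image2 (· * ·) T (tranBall G (r + a))).ncard :=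
        Set.ncard_le_ncard hsub (hT.image2 _ hfin)
    _ ≤ (T ×ˢ tranBall G (r + a)).ncard := by
        rw [← Set.image_prod]
        exact Set.ncard_image_le (hT.prod hfin)
    _ = T.ncard * NCount G (r + a) := Set.ncard_prod

theorem ncard_mul_nCount_le_nCount {Γ G : Subgroup (Isom n)} (hle : G ≤ Γ) {T : Set (Isom n)}
    (hTΓ : T ⊆ Γ) (hT : T.Pairwise fun δ δ' => δ⁻¹ * δ' ∉ G) {a : ℝ}
    (ha : ∀ δ ∈ T, ‖tran δ‖ ≤ a) {r : ℝ} (hfin : (tranBall Γ (r + a)).Finite) :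
    T.ncard * NCount G r ≤ NCount Γ (r + a) := by
  rw [nCount_eq_ncard_tranBall, ← Set.ncard_prod]
  refine Set.ncard_le_ncard_of_injOn (fun p => p.1 * p.2) ?_ ?_ hfin
  · rintro ⟨δ, g⟩ ⟨hδ, hg, hgr⟩
    refine ⟨mul_mem (hTΓ hδ) (hle hg), ?_⟩
    linarith [norm_tran_mul_le δ g, ha δ hδ]
  · rintro ⟨δ, g⟩ ⟨hδ, hg, -⟩ ⟨δ', g'⟩ ⟨hδ', hg', -⟩ (h : δ * g = δ' * g')
    obtain rfl : δ = δ' := by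
      by_contra hne
      refine hT hδ hδ' hne ?_
      have hδδ' : δ⁻¹ * δ' = g * g'⁻¹ := by
        rw [eq_mul_inv_iff_mul_eq, mul_assoc, ← h, inv_mul_cancel_left]
      exact hδδ' ▸ mul_mem hg (inv_mem hg')
    rw [mul_left_cancel h]

end Counting

section Growth

variable {n : ℕ} {Γ G : Subgroup (Isom n)}

theorem isBigO_nCount_of_le (hle : G ≤ Γ) (hfin : ∀ r, (tranBall Γ r).Finite) :
    (fun r : ℝ => (NCount G r : ℝ)) =O[atTop] fun r : ℝ => (NCount Γ r : ℝ) :=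
  IsBigO.of_bound 1 <| .of_forall fun r => by
    simpa using (nCount_mono hle le_rfl (hfin r) : NCount G r ≤ NCount Γ r)

theorem isBigO_nCount_of_relIndex_ne_zero (hfin : ∀ r, (tranBall G r).Finite)
    (h : G.relIndex Γ ≠ 0) :
    (fun r : ℝ => (NCount Γ r : ℝ)) =O[atTop] fun r : ℝ => (NCount G r : ℝ) := by
  obtain ⟨T, hT, hcover⟩ := Subgroup.exists_finite_forall_exists_inv_mul_mem h
  obtain ⟨a, ha⟩ := (hT.image fun δ => ‖tran δ‖).bddAbove
  obtain ⟨D, hD⟩ := nCount_two_mul_le G hfin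
  refine IsBigO.of_bound (T.ncard * D : ℕ) ?_
  filter_upwards [eventually_ge_atTop a, eventually_gt_atTop 0] with r har hr
  have hbound : NCount Γ r ≤ T.ncard * D * NCount G r :=
    calc NCount Γ r ≤ T.ncard * NCount G (r + a) :=
          nCount_le_ncard_mul_nCount hT hcover (fun δ hδ => ha ⟨δ, hδ, rfl⟩) (hfin _)
      _ ≤ T.ncard * NCount G (2 * r) := by
          gcongr; exact nCount_mono le_rfl (by linarith) (hfin _)
      _ ≤ T.ncard * D * NCount G r := by rw [mul_assoc]; gcongr; exact hD r hr
  simp only [Real.norm_natCast]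
  exact_mod_cast hbound

theorem relIndex_ne_zero_of_isBigO (hle : G ≤ Γ) (hfin : ∀ r, (tranBall Γ r).Finite)
    (h : (fun r : ℝ => (NCount Γ r : ℝ)) =O[atTop] fun r : ℝ => (NCount G r : ℝ)) :
    G.relIndex Γ ≠ 0 := by
  intro h0
  have hfinG := finite_tranBall_of_le hle hfin
  obtain ⟨c, hc0, hc⟩ := h.exists_pos
  obtain ⟨D, hD⟩ := nCount_two_mul_le G hfinG
  obtain ⟨T, hTcard, hTΓ, hT⟩ :=
    Subgroup.exists_ncard_eq_pairwise_inv_mul_notMem h0 (⌈c⌉₊ * D + 1)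
  obtain ⟨a, ha⟩ := (Set.finite_of_ncard_pos (by omega : 0 < T.ncard)).image
    (fun δ => ‖tran δ‖) |>.bddAbove
  obtain ⟨r, ⟨har, hr⟩, hcr⟩ := (((eventually_ge_atTop a).and (eventually_gt_atTop 0)).and
    (tendsto_atTop_add_const_right _ a tendsto_id |>.eventually hc.bound)).exists
  simp only [id, Real.norm_natCast] at hcr
  have hcount : (T.ncard * NCount G r : ℝ) ≤ c * (D * NCount G r) :=
    calc (T.ncard * NCount G r : ℝ) ≤ NCount Γ (r + a) := by
          exact_mod_cast
            ncard_mul_nCount_le_nCount hle hTΓ hT (fun δ hδ => ha ⟨δ, hδ, rfl⟩) (hfin _)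
      _ ≤ c * NCount G (r + a) := hcr
      _ ≤ c * (D * NCount G r) := by
          gcongr
          exact_mod_cast (nCount_mono le_rfl (by linarith) (hfinG (2 * r))).trans (hD r hr)
  have hpos : (0 : ℝ) < NCount G r := by exact_mod_cast one_le_nCount hr.le (hfinG r)
  have hTc : (T.ncard : ℝ) ≤ c * D := le_of_mul_le_mul_right (by rwa [mul_assoc]) hpos
  have hceil : c * D ≤ ⌈c⌉₊ * D := mul_le_mul_of_nonneg_right (Nat.le_ceil c) D.cast_nonneg
  rw [hTcard] at hTc
  push_cast at hTc
  linarith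

end Growth

/-- A subgroup `G` of a discrete `Γ ≤ E(n)` has finite index in `Γ`
if and only if `N_G(r) = Θ(N_Γ(r))` (equivalently, iff `G` and `Γ` have the same dimension). -/
theorem finite_index_iff_same_growth {n : ℕ} (Γ G : Subgroup (Isom n))
    (hΓ : IsDiscreteSubgroup Γ) (hle : G ≤ Γ) :
    G.relIndex Γ ≠ 0 ↔
      (fun r : ℝ => (NCount G r : ℝ)) =Θ[atTop] (fun r : ℝ => (NCount Γ r : ℝ)) := by
  have hfinΓ := hΓ.finite_tranBall
  exact ⟨fun h => ⟨isBigO_nCount_of_le hle hfinΓ,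
      isBigO_nCount_of_relIndex_ne_zero (finite_tranBall_of_le hle hfinΓ) h⟩,
    fun h => relIndex_ne_zero_of_isBigO hle hfinΓ h.2⟩
end
end

section
/- Let Γ be a discrete subgroup of E(n), let (G, V) be a finite index cocompact translation pair of Γ, and let A = λA′ where A′ ∈ O(n) and λ > 0. Suppose that AΓA⁻¹ ⊆ Γ. Then there exists a ∈ ℝⁿ such that AV = V + a; in particular the affine subspace AV is parallel to V. -/
/-!
Write `W` for the direction of `V`. If `g ∈ G` translates `V` by `v`, some power `γ'^m` of
the conjugate `γ' = A g A⁻¹ ∈ Γ` lies in `G`, because `G` has finite index. That power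
translates `V` by a vector of `W` and moves the point `A p` by `m • A v`. An isometry moves two
points by vectors that differ by at most twice their distance, so the multiples of `A v` stay
within bounded distance of `W`, which forces `A v ∈ W`. Cocompactness makes these vectors `v`
span `W`, so `A W = W`, and then `AV = V + (A p - p)` for any `p ∈ V`.
-/

open Metric Filter MeasureTheory Asymptotics

noncomputable section

theorem Submodule.mem_of_frequently_exists_dist_nsmul_le {E : Type*} [NormedAddCommGroup E]
    [NormedSpace ℝ E] {s : Submodule ℝ E} (hs : IsClosed (s : Set E)) {x : E} {C : ℝ}
    (h : ∃ᶠ k : ℕ in atTop, ∃ w ∈ s, dist (k • x) w ≤ C) : x ∈ s := by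
  rw [← SetLike.mem_coe, ← hs.closure_eq, Metric.mem_closure_iff]
  intro ε hε
  obtain ⟨k, hk, w, hw, hkw⟩ := h.forall_exists_of_atTop (⌈C / ε⌉₊ + 1)
  have hCk : C / ε < k := by
    calc C / ε ≤ ⌈C / ε⌉₊ := Nat.le_ceil _
      _ < k := by exact_mod_cast hk
  have hk0 : (0 : ℝ) < k := Nat.cast_pos.mpr (by omega)
  refine ⟨(k : ℝ)⁻¹ • w, s.smul_mem _ hw, ?_⟩
  calc dist x ((k : ℝ)⁻¹ • w)
      = dist ((k : ℝ)⁻¹ • (k : ℝ) • x) ((k : ℝ)⁻¹ • w) := by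
        rw [inv_smul_smul₀ hk0.ne']
    _ = (k : ℝ)⁻¹ * dist (k • x) w := by
        rw [dist_smul₀, Real.norm_of_nonneg (by positivity), Nat.cast_smul_eq_nsmul]
    _ ≤ (k : ℝ)⁻¹ * C := by gcongr
    _ < ε := by rwa [inv_mul_lt_iff₀ hk0, ← div_lt_iff₀ hε]

open Pointwise in
theorem AffineSubspace.image_linearEquiv_eq_image_add {k E : Type*} [Ring k] [AddCommGroup E]
    [Module k E] (A : E ≃ₗ[k] E) {V : AffineSubspace k E}
    (hA : V.direction.map (A : E →ₗ[k] E) = V.direction) {p : E} (hp : p ∈ V) :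
    (fun x => A x) '' V = (fun x => x + (A p - p)) '' V := by
  have hmap : V.map (A : E →ₗ[k] E).toAffineMap = (A p - p) +ᵥ V := by
    refine AffineSubspace.ext_of_direction_eq ?_ ⟨A p, ?_, ?_⟩
    · rw [AffineSubspace.map_direction, AffineSubspace.pointwise_vadd_direction]
      exact hA
    · exact AffineSubspace.mem_map_of_mem _ hp
    · simpa using Set.vadd_mem_vadd_set (a := A p - p) (SetLike.mem_coe.mpr hp)
  have := congrArg ((↑) : AffineSubspace k E → Set E) hmap
  rw [AffineSubspace.coe_map, AffineSubspace.coe_pointwise_vadd] at this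
  simpa [← Set.image_vadd, add_comm] using this

namespace IsometryEquiv

variable {E : Type*} [NormedAddCommGroup E]

theorem dist_displacement_le (f : E ≃ᵢ E) (p q : E) :
    dist (f p - p) (f q - q) ≤ 2 * dist p q := by
  calc dist (f p - p) (f q - q) ≤ dist (f p) (f q) + dist p q := dist_sub_sub_le _ _ _ _
    _ = 2 * dist p q := by rw [f.dist_eq]; ring

theorem pow_apply_eq_add_nsmul {s : Set E} {g : E ≃ᵢ E} {v : E} (hs : ∀ x ∈ s, g x ∈ s)
    (hg : ∀ x ∈ s, g x = x + v) (k : ℕ) : ∀ x ∈ s, (g ^ k) x = x + k • v := by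
  induction k with
  | zero => simp
  | succ k ih =>
    intro x hx
    rw [pow_succ, mul_apply, ih _ (hs x hx), hg x hx, succ_nsmul]
    abel

theorem pow_apply_of_semiconj {F : Type*} [NormedAddCommGroup F] {A : E → F} {γ : E ≃ᵢ E}
    {γ' : F ≃ᵢ F} (h : ∀ y, γ' (A y) = A (γ y)) (k : ℕ) (y : E) :
    (γ' ^ k) (A y) = A ((γ ^ k) y) := by
  induction k with
  | zero => simp
  | succ k ih => rw [pow_succ', mul_apply, ih, h, pow_succ', mul_apply]

end IsometryEquiv

/-- `{tran_V g | g ∈ G}`. -/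
def translationVectors {n : ℕ} (G : Subgroup (Isom n)) (V : AffineSubspace ℝ (En n)) :
    Set (En n) :=
  {v | ∃ g ∈ G, ∀ x ∈ (V : Set (En n)), g x = x + v}

namespace IsCocompactTranslationPair

variable {n : ℕ} {Γ G : Subgroup (Isom n)} {V : AffineSubspace ℝ (En n)}

theorem translationVectors_subset_direction (h : IsCocompactTranslationPair Γ G V) :
    translationVectors G V ⊆ V.direction := by
  rintro v ⟨g, hg, hgv⟩
  obtain ⟨p, hp⟩ := h.nonempty
  have := AffineSubspace.vsub_mem_direction (h.invariant g hg p hp) hp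
  rwa [hgv p hp, vsub_eq_sub, add_sub_cancel_left] at this

theorem direction_le_span_translationVectors (h : IsCocompactTranslationPair Γ G V) :
    V.direction ≤ Submodule.span ℝ (translationVectors G V) := by
  intro w hw
  obtain ⟨p, hp⟩ := h.nonempty
  obtain ⟨K, hK, -, hcover⟩ := h.cocompact
  obtain ⟨R, hR⟩ := hK.isBounded.subset_closedBall 0
  refine Submodule.mem_of_frequently_exists_dist_nsmul_le (C := R + ‖p‖)
    (Submodule.closed_of_finiteDimensional _) (Eventually.of_forall fun k => ?_).frequently
  have hx : k • w + p ∈ V :=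
    AffineSubspace.vadd_mem_of_mem_direction (V.direction.smul_of_tower_mem k hw) hp
  obtain ⟨g, hg, hgK⟩ := hcover _ hx
  obtain ⟨v, hv⟩ := h.translation g hg
  refine ⟨-v, Submodule.neg_mem _ (Submodule.subset_span ⟨g, hg, hv⟩), ?_⟩
  have hgR : ‖k • w + p + v‖ ≤ R := by
    simpa [hv _ hx] using hR hgK
  calc dist (k • w) (-v) = ‖(k • w + p + v) - p‖ := by rw [dist_eq_norm]; congr 1; abel
    _ ≤ R + ‖p‖ := (norm_sub_le _ _).trans (by gcongr)

theorem span_translationVectors (h : IsCocompactTranslationPair Γ G V) :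
    Submodule.span ℝ (translationVectors G V) = V.direction :=
  le_antisymm (Submodule.span_le.mpr h.translationVectors_subset_direction)
    h.direction_le_span_translationVectors

theorem nsmul_mem_translationVectors (h : IsCocompactTranslationPair Γ G V) {v : En n}
    (hv : v ∈ translationVectors G V) (k : ℕ) : k • v ∈ translationVectors G V := by
  obtain ⟨g, hg, hgv⟩ := hv
  exact ⟨g ^ k, pow_mem hg k, IsometryEquiv.pow_apply_eq_add_nsmul (h.invariant g hg) hgv k⟩

variable {A : En n ≃ₗ[ℝ] En n}

theorem exists_dist_nsmul_map_le (h : IsCocompactTranslationPair Γ G V)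
    (hfin : G.relIndex Γ ≠ 0)
    (hconj : ∀ γ ∈ Γ, ∃ γ' ∈ Γ, ∀ x : En n, γ' x = A (γ (A.symm x)))
    {v p : En n} (hv : v ∈ translationVectors G V) (hp : p ∈ V) :
    ∃ m : ℕ, 0 < m ∧ ∃ u ∈ V.direction, dist (m • A v) u ≤ 2 * dist p (A p) := by
  obtain ⟨g, hg, hgv⟩ := hv
  obtain ⟨γ', hγ', hγ'g⟩ := hconj g (h.le hg)
  obtain ⟨m, hm, -, hmG, -⟩ := Subgroup.exists_pow_mem_of_relIndex_ne_zero hfin hγ'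
  have hAp : (γ' ^ m) (A p) - A p = m • A v := by
    have hsemiconj : ∀ y, γ' (A y) = A (g y) := fun y => by rw [hγ'g, A.symm_apply_apply]
    rw [IsometryEquiv.pow_apply_of_semiconj hsemiconj,
      IsometryEquiv.pow_apply_eq_add_nsmul (h.invariant g hg) hgv m p hp,
      map_add, map_nsmul, add_sub_cancel_left]
  refine ⟨m, hm, (γ' ^ m) p - p,
    AffineSubspace.vsub_mem_direction (h.invariant _ hmG p hp) hp, ?_⟩
  rw [← hAp, dist_comm]
  exact (γ' ^ m).dist_displacement_le p (A p)

theorem map_mem_direction (h : IsCocompactTranslationPair Γ G V) (hfin : G.relIndex Γ ≠ 0)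
    (hconj : ∀ γ ∈ Γ, ∃ γ' ∈ Γ, ∀ x : En n, γ' x = A (γ (A.symm x)))
    {v : En n} (hv : v ∈ translationVectors G V) : A v ∈ V.direction := by
  obtain ⟨p, hp⟩ := h.nonempty
  refine Submodule.mem_of_frequently_exists_dist_nsmul_le (C := 2 * dist p (A p))
    (Submodule.closed_of_finiteDimensional _) (frequently_atTop.mpr fun N => ?_)
  obtain ⟨m, hm, u, hu, hmu⟩ :=
    h.exists_dist_nsmul_map_le hfin hconj (h.nsmul_mem_translationVectors hv N) hp
  refine ⟨m * N, Nat.le_mul_of_pos_left N hm, u, hu, ?_⟩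
  rwa [map_nsmul, smul_smul] at hmu

theorem map_direction_eq (h : IsCocompactTranslationPair Γ G V) (hfin : G.relIndex Γ ≠ 0)
    (hconj : ∀ γ ∈ Γ, ∃ γ' ∈ Γ, ∀ x : En n, γ' x = A (γ (A.symm x))) :
    V.direction.map (A : En n →ₗ[ℝ] En n) = V.direction := by
  have hle : V.direction.map (A : En n →ₗ[ℝ] En n) ≤ V.direction := by
    conv_lhs => rw [← h.span_translationVectors]
    exact (Submodule.map_span_le _ _ _).mpr fun v hv => h.map_mem_direction hfin hconj hv
  exact Submodule.eq_of_le_of_finrank_eq hle (LinearEquiv.finrank_map_eq A _)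

end IsCocompactTranslationPair

theorem conjugation_maps_V_parallel_general {n : ℕ} (Γ G : Subgroup (Isom n))
    (V : AffineSubspace ℝ (En n))
    (hpair : IsCocompactTranslationPair Γ G V) (hfin : G.relIndex Γ ≠ 0)
    (A : En n ≃ₗ[ℝ] En n)
    (hconj : ∀ γ ∈ Γ, ∃ γ' ∈ Γ, ∀ x : En n, γ' x = A (γ (A.symm x))) :
    ∃ a : En n, (fun x => A x) '' (V : Set (En n)) = (fun x => x + a) '' (V : Set (En n)) := by
  obtain ⟨p, hp⟩ := hpair.nonempty
  exact ⟨A p - p,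
    AffineSubspace.image_linearEquiv_eq_image_add A (hpair.map_direction_eq hfin hconj) hp⟩

/-- Let `(G, V)` be a finite index cocompact translation pair of a discrete
`Γ ≤ E(n)`, and `A = λA'` linear conformal with `λ > 0` and `AΓA⁻¹ ⊆ Γ`. Then `AV = V + a`
for some `a ∈ ℝⁿ`. -/
theorem conjugation_maps_V_parallel {n : ℕ} (Γ G : Subgroup (Isom n))
    (V : AffineSubspace ℝ (En n)) (hΓ : IsDiscreteSubgroup Γ)
    (hpair : IsCocompactTranslationPair Γ G V) (hfin : G.relIndex Γ ≠ 0)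
    (A : En n ≃ₗ[ℝ] En n) (lam : ℝ) (hlam : 0 < lam)
    (hconf : ∀ x : En n, ‖A x‖ = lam * ‖x‖)
    (hconj : ∀ γ ∈ Γ, ∃ γ' ∈ Γ, ∀ x : En n, γ' x = A (γ (A.symm x))) :
    ∃ a : En n, (fun x => A x) '' (V : Set (En n)) = (fun x => x + a) '' (V : Set (En n)) :=
  conjugation_maps_V_parallel_general Γ G V hpair hfin A hconj
end
end

section
/- Let m ≥ 1 be an integer and ε > 0. Then there exists a constant C > 0, depending only on m and ε, such that for every sequence (x_j)_{j=1}^∞ of points of the unit sphere S^m ⊂ ℝ^{m+1}, there exists a point y ∈ S^m with |y − x_j| ≥ C · j^{−(1/m + ε)} for every j ≥ 1 (distance measured in the Euclidean norm of ℝ^{m+1}). -/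
/-!
Caps of radius `r_j = C j^{-(1/m + ε)}` on `S^m` have area of order `r_j^m = C^m j^{-(1 + mε)}`,
which is summable; so for small `C` the caps cannot cover the sphere, and any uncovered point
serves as `y`. Instead of surface area we use the volume of the cone over a cap inside the unit
ball: it lies within `r` of a unit segment, hence is covered by about `1/r` balls of radius `2r`
and has volume `O(r^m)`.
-/

open Metric Filter MeasureTheory Asymptotics

noncomputable section

section Needle

variable {E : Type*} [NormedAddCommGroup E] [NormedSpace ℝ E]

/-- Contains the cone `{t • y | 0 ≤ t ≤ 1, ‖y - x‖ ≤ r, ‖y‖ = 1}` over the spherical cap of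
radius `r` about `x`. -/
def needle (x : E) (r : ℝ) : Set E := {z | ‖z‖ ≤ 1 ∧ ‖z - ‖z‖ • x‖ ≤ r}

lemma needle_subset_biUnion_ball {x : E} (hx : ‖x‖ = 1) {r : ℝ} (hr : 0 < r) :
    needle x r ⊆ ⋃ k ∈ Finset.range (⌊1 / r⌋₊ + 1), ball ((k * r) • x) (2 * r) := by
  rintro z ⟨hz1, hzr⟩
  set t := ‖z‖
  set k := ⌊t / r⌋₊
  have hkt : (k : ℝ) * r ≤ t := (le_div_iff₀ hr).1 (Nat.floor_le (by positivity))
  have htk : t < (k : ℝ) * r + r := by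
    have := (div_lt_iff₀ hr).1 (Nat.lt_floor_add_one (t / r))
    linarith
  have hk : k ∈ Finset.range (⌊1 / r⌋₊ + 1) :=
    Finset.mem_range_succ_iff.2 (Nat.floor_le_floor (by gcongr))
  refine Set.mem_biUnion hk (mem_ball_iff_norm.2 ?_)
  calc ‖z - ((k : ℝ) * r) • x‖ = ‖(z - t • x) + (t - k * r) • x‖ := by
        rw [sub_smul]; abel_nf
    _ ≤ ‖z - t • x‖ + ‖(t - k * r) • x‖ := norm_add_le _ _
    _ = ‖z - t • x‖ + (t - k * r) := by
        rw [norm_smul, hx, mul_one, Real.norm_of_nonneg (by linarith)]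
    _ < 2 * r := by linarith

lemma addHaar_needle_le [MeasurableSpace E] [BorelSpace E] [FiniteDimensional ℝ E]
    (μ : Measure E) [μ.IsAddHaarMeasure] {m : ℕ} (hE : Module.finrank ℝ E = m + 1)
    {x : E} (hx : ‖x‖ = 1) {r : ℝ} (hr : 0 < r) (hr1 : r ≤ 1) :
    μ (needle x r) ≤ ENNReal.ofReal (2 ^ (m + 2) * r ^ m) * μ (ball 0 1) := by
  have : Nontrivial E := Module.nontrivial_of_finrank_eq_succ hE
  have hcount : ((⌊1 / r⌋₊ : ℝ) + 1) * (2 * r) ^ (m + 1) ≤ 2 ^ (m + 2) * r ^ m := by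
    have h1r : 1 ≤ 1 / r := by rw [le_div_iff₀ hr]; linarith
    calc ((⌊1 / r⌋₊ : ℝ) + 1) * (2 * r) ^ (m + 1) ≤ (2 / r) * (2 * r) ^ (m + 1) := by
          gcongr
          linarith [Nat.floor_le (zero_le_one.trans h1r), show 2 / r = 1 / r + 1 / r by ring]
      _ = 2 ^ (m + 2) * r ^ m := by field_simp; ring
  calc μ (needle x r)
      ≤ μ (⋃ k ∈ Finset.range (⌊1 / r⌋₊ + 1), ball (((k : ℝ) * r) • x) (2 * r)) :=
        measure_mono (needle_subset_biUnion_ball hx hr)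
    _ ≤ ∑ k ∈ Finset.range (⌊1 / r⌋₊ + 1), μ (ball (((k : ℝ) * r) • x) (2 * r)) :=
        measure_biUnion_finset_le _ _
    _ = ENNReal.ofReal (((⌊1 / r⌋₊ : ℝ) + 1) * (2 * r) ^ (m + 1)) * μ (ball 0 1) := by
        simp only [Measure.addHaar_ball μ _ (by positivity : (0 : ℝ) ≤ 2 * r), hE,
          Finset.sum_const, Finset.card_range, nsmul_eq_mul]
        rw [ENNReal.ofReal_mul (by positivity), mul_assoc]
        norm_cast
    _ ≤ ENNReal.ofReal (2 ^ (m + 2) * r ^ m) * μ (ball 0 1) := by gcongr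

lemma closedBall_subset_iUnion_needle [Nontrivial E] {ι : Type*} {x : ι → E} {r : ι → ℝ}
    (hr : ∀ i, 0 ≤ r i) (hcover : ∀ y : E, ‖y‖ = 1 → ∃ i, ‖y - x i‖ ≤ r i) :
    closedBall (0 : E) 1 ⊆ ⋃ i, needle (x i) (r i) := by
  intro z hz
  rw [mem_closedBall_zero_iff] at hz
  rcases eq_or_ne z 0 with rfl | hz0
  · obtain ⟨y, hy⟩ := (NormedSpace.sphere_nonempty (E := E) (x := 0) (r := 1)).2 zero_le_one
    obtain ⟨i, -⟩ := hcover y (mem_sphere_zero_iff_norm.1 hy)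
    exact Set.mem_iUnion.2 ⟨i, by simp [needle, hr i]⟩
  · have hzpos : 0 < ‖z‖ := norm_pos_iff.2 hz0
    obtain ⟨i, hi⟩ := hcover (‖z‖⁻¹ • z) (by rw [norm_smul, norm_inv, norm_norm,
      inv_mul_cancel₀ hzpos.ne'])
    refine Set.mem_iUnion.2 ⟨i, hz, ?_⟩
    calc ‖z - ‖z‖ • x i‖ = ‖z‖ * ‖‖z‖⁻¹ • z - x i‖ := by
          rw [← norm_smul_of_nonneg hzpos.le, smul_sub, smul_inv_smul₀ hzpos.ne']
      _ ≤ 1 * r i := by gcongr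
      _ = r i := one_mul _

end Needle

theorem exists_norm_eq_one_forall_le_norm_sub {E : Type*} [NormedAddCommGroup E]
    [NormedSpace ℝ E] [FiniteDimensional ℝ E] {m : ℕ} (hE : Module.finrank ℝ E = m + 1)
    {ι : Type*} [Countable ι] {x : ι → E} (hx : ∀ i, ‖x i‖ = 1) {r : ι → ℝ}
    (hr0 : ∀ i, 0 < r i) (hr1 : ∀ i, r i ≤ 1) {s : ℝ} (hs : HasSum (fun i => r i ^ m) s)
    (hsmall : 2 ^ (m + 2) * s < 1) :
    ∃ y : E, ‖y‖ = 1 ∧ ∀ i, r i ≤ ‖y - x i‖ := by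
  borelize E
  have : Nontrivial E := Module.nontrivial_of_finrank_eq_succ hE
  by_contra! hcover
  set μ : Measure E := Measure.addHaar
  set B := μ (ball 0 1)
  have hsum : ∑' i, ENNReal.ofReal (2 ^ (m + 2) * r i ^ m) = ENNReal.ofReal (2 ^ (m + 2) * s) := by
    have hnonneg (i : ι) : 0 ≤ 2 ^ (m + 2) * r i ^ m := by have := hr0 i; positivity
    rw [← ENNReal.ofReal_tsum_of_nonneg hnonneg (hs.mul_left _).summable, (hs.mul_left _).tsum_eq]
  have hle : B ≤ ENNReal.ofReal (2 ^ (m + 2) * s) * B :=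
    calc B = μ (closedBall 0 1) := (Measure.addHaar_closedBall_eq_addHaar_ball μ 0 1).symm
      _ ≤ μ (⋃ i, needle (x i) (r i)) := measure_mono (closedBall_subset_iUnion_needle
          (fun i => (hr0 i).le) fun y hy => (hcover y hy).imp fun _ => le_of_lt)
      _ ≤ ∑' i, μ (needle (x i) (r i)) := measure_iUnion_le _
      _ ≤ ∑' i, ENNReal.ofReal (2 ^ (m + 2) * r i ^ m) * B :=
          ENNReal.tsum_le_tsum fun i => addHaar_needle_le μ hE (hx i) (hr0 i) (hr1 i)
      _ = ENNReal.ofReal (2 ^ (m + 2) * s) * B := by rw [ENNReal.tsum_mul_right, hsum]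
  have hlt : ENNReal.ofReal (2 ^ (m + 2) * s) * B < B := by
    simpa only [one_mul] using ENNReal.mul_lt_mul_left (measure_ball_pos μ 0 one_pos).ne'
      measure_ball_lt_top.ne (ENNReal.ofReal_lt_one.2 hsmall)
  exact hle.not_gt hlt

lemma exists_hasSum_mul_rpow_pow_lt_one {A : ℝ} (hA : 1 ≤ A) {m : ℕ} {p : ℝ} (hpm : 1 < p * m) :
    ∃ C : ℝ, 0 < C ∧ C ≤ 1 ∧ ∃ s, HasSum (fun k : ℕ => (C * ((k : ℝ) + 1) ^ (-p)) ^ m) s ∧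
      A * s < 1 := by
  have hm : m ≠ 0 := by rintro rfl; norm_num at hpm
  obtain ⟨S, hS⟩ : Summable fun k : ℕ => ((k : ℝ) + 1) ^ (-(p * m)) := by
    simpa using (summable_nat_add_iff 1).2 (Real.summable_nat_rpow.2 (neg_lt_neg hpm))
  have hS0 : 0 ≤ S := hS.nonneg fun k => by positivity
  set C := (A * (S + 1))⁻¹
  have hC0 : 0 < C := by have := zero_lt_one.trans_le hA; positivity
  have hC1 : C ≤ 1 := inv_le_one_of_one_le₀ (one_le_mul_of_one_le_of_one_le hA (by linarith))
  have hpow (k : ℕ) : (C * ((k : ℝ) + 1) ^ (-p)) ^ m = C ^ m * ((k : ℝ) + 1) ^ (-(p * m)) := by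
    rw [mul_pow, ← Real.rpow_natCast (_ ^ _), ← Real.rpow_mul (by positivity), neg_mul]
  refine ⟨C, hC0, hC1, C ^ m * S, by simpa only [hpow] using hS.mul_left (C ^ m), ?_⟩
  calc A * (C ^ m * S) ≤ A * (C * S) := by
        gcongr; exact pow_le_of_le_one hC0.le hC1 hm
    _ = S / (S + 1) := by simp only [C]; field_simp
    _ < 1 := (div_lt_one (by linarith)).2 (by linarith)

/-- For `m ≥ 1` and `ε > 0` there is `C > 0` (depending only on `m, ε`)
such that for every sequence `(x_j)` on the unit sphere `S^m ⊂ ℝ^{m+1}` there is a point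
`y ∈ S^m` with `|y − x_j| ≥ C · j^{−(1/m + ε)}` for every `j ≥ 1`. -/
theorem sphere_filling_estimate (m : ℕ) (hm : 1 ≤ m) (ε : ℝ) (hε : 0 < ε) :
    ∃ C : ℝ, 0 < C ∧ ∀ x : ℕ → EuclideanSpace ℝ (Fin (m + 1)),
      (∀ j : ℕ, ‖x j‖ = 1) →
      ∃ y : EuclideanSpace ℝ (Fin (m + 1)), ‖y‖ = 1 ∧
        ∀ j : ℕ, 1 ≤ j → C * (j : ℝ) ^ (-(1 / (m : ℝ) + ε)) ≤ ‖y - x j‖ := by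
  set p := 1 / (m : ℝ) + ε
  have hp0 : 0 < p := by positivity
  have hpm : 1 < p * m := by
    have hm0 : (0 : ℝ) < m := by exact_mod_cast hm
    rw [add_mul, one_div, inv_mul_cancel₀ hm0.ne']
    nlinarith
  obtain ⟨C, hC0, hC1, s, hs, hsmall⟩ :=
    exists_hasSum_mul_rpow_pow_lt_one (one_le_pow₀ (one_le_two : (1 : ℝ) ≤ 2)) hpm
  refine ⟨C, hC0, fun x hx => ?_⟩
  have hr1 (k : ℕ) : C * ((k : ℝ) + 1) ^ (-p) ≤ 1 :=
    mul_le_one₀ hC1 (by positivity) (Real.rpow_le_one_of_one_le_of_nonpos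
      (le_add_of_nonneg_left k.cast_nonneg) (neg_nonpos.2 hp0.le))
  obtain ⟨y, hy, hyx⟩ := exists_norm_eq_one_forall_le_norm_sub finrank_euclideanSpace_fin
    (x := fun k => x (k + 1)) (fun k => hx _) (fun k => by positivity) hr1 hs hsmall
  refine ⟨y, hy, fun j hj => ?_⟩
  obtain ⟨k, rfl⟩ := Nat.exists_eq_add_of_le' hj
  simpa using hyx k
end
end

section
/- Let Γ be a discrete subgroup of E(n), and let (G, V) be a cocompact translation pair of Γ such that G is abelian and V is a linear subspace with k = dim V < n − 2. Then there exist unit vectors u₁, u₂ in the orthogonal complement V^⊥ of V with the following property: if σ : [0,1] → ℝⁿ is a path (of finite total variation) with σ(0) ∈ L₁ = [0,∞)u₁ and σ(1) ∈ ⋃_{γ∈G} γ(L₂) where L₂ = [0,∞)u₂, and if s = inf_{t∈[0,1]} d(σ(t), V) > 0, then the length (total variation) of σ is at least √2 · s. -/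
open Metric Filter MeasureTheory Asymptotics

noncomputable section

/-
The linear parts of the elements of `G` commute, fix `V` pointwise and hence preserve `V^⊥`.
A commuting family of real linear maps leaves invariant a nonzero subspace `U ⊆ V^⊥` of
dimension at most 2: by Schur's lemma, the algebra they generate acts on a minimal invariant
subspace through a field extension of `ℝ` of finite degree, that is through `ℝ` or `ℂ`.
Take `u₂ ∈ U` and `u₁ ⊥ V + U`, which exists because `dim V + 2 < n`. Every point of
`⋃_{γ∈G} γ(L₂)` lies in `V + U`, so the endpoints of `σ` are orthogonal; as `0 ∈ V`, both have
norm at least `s`, and by Pythagoras they are at distance at least `√2 · s`.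
-/

open Module
open scoped RealInnerProductSpace

theorem finrank_real_le_two_of_field (K : Type*) [Field K] [Algebra ℝ K]
    [FiniteDimensional ℝ K] : finrank ℝ K ≤ 2 := by
  let ι : K →ₐ[ℝ] ℂ := IsAlgClosed.lift
  calc finrank ℝ K ≤ finrank ℝ ℂ :=
        LinearMap.finrank_le_finrank_of_injective (f := ι.toLinearMap) ι.toRingHom.injective
    _ = 2 := Complex.finrank_real_complex

theorem IsSimpleModule.finrank_real_le_two {R M : Type*} [CommRing R] [Algebra ℝ R]
    [AddCommGroup M] [Module R M] [Module ℝ M] [IsScalarTower ℝ R M] [FiniteDimensional ℝ M]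
    [IsSimpleModule R M] : finrank ℝ M ≤ 2 := by
  obtain ⟨I, hI, ⟨e⟩⟩ := isSimpleModule_iff_quot_maximal.mp ‹IsSimpleModule R M›
  let _ := Ideal.Quotient.field I
  let e' := e.restrictScalars ℝ
  have := e'.finiteDimensional
  rw [e'.finrank_eq]
  exact finrank_real_le_two_of_field (R ⧸ I)

theorem Submodule.exists_le_ne_bot_finrank_real_le_two {R M : Type*} [CommRing R]
    [Algebra ℝ R] [AddCommGroup M] [Module R M] [Module ℝ M] [IsScalarTower ℝ R M]
    [FiniteDimensional ℝ M] {W : Submodule R M} (hW : W ≠ ⊥) :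
    ∃ U ≤ W, U ≠ ⊥ ∧ finrank ℝ U ≤ 2 := by
  have : IsArtinian R M := isArtinian_of_tower ℝ inferInstance
  obtain ⟨U, hU, hUW⟩ := (eq_bot_or_exists_atom_le W).resolve_left hW
  have : IsSimpleModule R U := isSimpleModule_iff_isAtom.mpr hU
  have : FiniteDimensional ℝ U :=
    .of_injective (U.subtype.restrictScalars ℝ) U.injective_subtype
  exact ⟨U, hUW, hU.1, IsSimpleModule.finrank_real_le_two (R := R)⟩

theorem Module.End.exists_invtSubmodule_finrank_le_two {E : Type*} [AddCommGroup E]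
    [Module ℝ E] [FiniteDimensional ℝ E] {S : Set (Module.End ℝ E)}
    (hS : ∀ f ∈ S, ∀ g ∈ S, f * g = g * f) {W : Submodule ℝ E} (hW : W ≠ ⊥)
    (hWS : ∀ f ∈ S, W ∈ f.invtSubmodule) :
    ∃ U ≤ W, U ≠ ⊥ ∧ finrank ℝ U ≤ 2 ∧ ∀ f ∈ S, U ∈ f.invtSubmodule := by
  let _ : CommRing (Algebra.adjoin ℝ S) :=
    { (Algebra.adjoin ℝ S).toRing with
      mul_comm := (Algebra.isMulCommutative_adjoin ℝ hS).is_comm.comm }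
  have hWA : ∀ f ∈ Algebra.adjoin ℝ S, W ∈ f.invtSubmodule := fun f hf => by
    induction hf using Algebra.adjoin_induction with
    | mem f hf => exact hWS f hf
    | algebraMap r => exact fun x hx => W.smul_mem r hx
    | add f g _ _ hf hg => exact fun x hx => W.add_mem (hf hx) (hg hx)
    | mul f g _ _ hf hg => exact fun x hx => hf (hg hx)
  let W' : Submodule (Algebra.adjoin ℝ S) E :=
    { W with smul_mem' := fun f x hx => hWA f f.2 hx }
  have hW' : W' ≠ ⊥ := by rwa [Ne, ← Submodule.restrictScalars_eq_bot_iff ℝ]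
  obtain ⟨U, hUW, hU, hU2⟩ := Submodule.exists_le_ne_bot_finrank_real_le_two hW'
  refine ⟨U.restrictScalars ℝ, hUW, by rwa [Ne, Submodule.restrictScalars_eq_bot_iff], hU2,
    fun f hf x hx => U.smul_mem ⟨f, Algebra.subset_adjoin hf⟩ hx⟩

theorem csInf_image_infDist_le_dist {X ι : Type*} [PseudoMetricSpace X] {f : ι → X}
    {T : Set ι} {t : ι} (ht : t ∈ T) {A : Set X} {p : X} (hp : p ∈ A) :
    sInf ((fun t => infDist (f t) A) '' T) ≤ dist (f t) p :=
  (csInf_le (⟨0, by rintro _ ⟨_, _, rfl⟩; exact infDist_nonneg⟩ :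
    BddBelow ((fun t => infDist (f t) A) '' T)) ⟨t, ht, rfl⟩).trans
    (infDist_le_dist_of_mem hp)

section InnerProductSpace

variable {E : Type*} [NormedAddCommGroup E] [InnerProductSpace ℝ E]

theorem Submodule.exists_norm_eq_one_mem {K : Submodule ℝ E} (hK : K ≠ ⊥) :
    ∃ u ∈ K, ‖u‖ = 1 := by
  obtain ⟨x, hxK, hx⟩ := K.exists_mem_ne_zero_of_ne_bot hK
  exact ⟨‖x‖⁻¹ • x, K.smul_mem _ hxK, norm_smul_inv_norm hx⟩

theorem Submodule.orthogonal_ne_bot_of_finrank_lt [FiniteDimensional ℝ E] {K : Submodule ℝ E}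
    (hK : finrank ℝ K < finrank ℝ E) : Kᗮ ≠ ⊥ := by
  rw [Ne, Submodule.orthogonal_eq_bot_iff]
  rintro rfl
  rw [finrank_top] at hK
  exact hK.false

theorem sqrt_two_mul_le_dist_of_inner_eq_zero {x y : E} (hxy : ⟪x, y⟫ = 0) {s : ℝ}
    (hs : 0 ≤ s) (hx : s ≤ ‖x‖) (hy : s ≤ ‖y‖) : √2 * s ≤ dist x y := by
  have hpyth := norm_sub_sq_eq_norm_sq_add_norm_sq_real hxy
  calc √2 * s = √(2 * s ^ 2) := by rw [Real.sqrt_mul zero_le_two, Real.sqrt_sq hs]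
    _ ≤ √(‖x - y‖ ^ 2) := Real.sqrt_le_sqrt (by nlinarith)
    _ = dist x y := by rw [Real.sqrt_sq (norm_nonneg _), dist_eq_norm]

namespace IsometryEquiv

/-- `ort g` as a linear map (Mazur–Ulam). -/
def linearPart (g : E ≃ᵢ E) : Module.End ℝ E :=
  g.toRealLinearIsometryEquiv.toLinearEquiv.toLinearMap

@[simp]
theorem linearPart_apply (g : E ≃ᵢ E) (x : E) : g.linearPart x = g x - g 0 :=
  g.toRealLinearIsometryEquiv_apply x

theorem apply_eq_linearPart_add (g : E ≃ᵢ E) (x : E) : g x = g.linearPart x + g 0 := by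
  simp

theorem linearPart_mul (g h : E ≃ᵢ E) : (g * h).linearPart = g.linearPart * h.linearPart := by
  ext x
  simp only [linearPart_apply, Module.End.mul_apply, map_sub, IsometryEquiv.mul_apply]
  abel

theorem inner_linearPart_linearPart (g : E ≃ᵢ E) (x y : E) :
    ⟪g.linearPart x, g.linearPart y⟫ = ⟪x, y⟫ :=
  g.toRealLinearIsometryEquiv.inner_map_map x y

theorem linearPart_apply_eq_self_of_mem_direction {g : E ≃ᵢ E} {V : AffineSubspace ℝ E}
    {p v : E} (hp : p ∈ V) (hv : ∀ x ∈ V, g x = x + v) {d : E} (hd : d ∈ V.direction) :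
    g.linearPart d = d := by
  have hpd : d + p ∈ V := AffineSubspace.vadd_mem_of_mem_direction hd hp
  calc g.linearPart d = g.linearPart (d + p) - g.linearPart p := by rw [map_add]; abel
    _ = (d + p + v - g 0) - (p + v - g 0) := by
      rw [linearPart_apply, linearPart_apply, hv _ hpd, hv p hp]
    _ = d := by abel

theorem orthogonal_mem_invtSubmodule_linearPart {g : E ≃ᵢ E} {K : Submodule ℝ E}
    (hK : ∀ d ∈ K, g.linearPart d = d) : Kᗮ ∈ g.linearPart.invtSubmodule := by
  rw [Module.End.mem_invtSubmodule_iff_forall_mem_of_mem]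
  intro u hu
  rw [Submodule.mem_orthogonal] at hu ⊢
  intro d hd
  rw [← hK d hd, inner_linearPart_linearPart, hu d hd]

end IsometryEquiv

theorem exists_unit_orthogonal_to_orbit [FiniteDimensional ℝ E] {G : Subgroup (E ≃ᵢ E)}
    {V : AffineSubspace ℝ E} (h0V : (0 : E) ∈ V) (hGV : ∀ g ∈ G, ∀ x ∈ V, g x ∈ V)
    (htrans : ∀ g ∈ G, ∃ v : E, ∀ x ∈ V, g x = x + v)
    (hcomm : ∀ g ∈ G, ∀ g' ∈ G, g * g' = g' * g)
    (hdim : finrank ℝ V.direction + 2 < finrank ℝ E) :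
    ∃ u₁ u₂ : E, ‖u₁‖ = 1 ∧ ‖u₂‖ = 1 ∧ u₁ ∈ V.directionᗮ ∧ u₂ ∈ V.directionᗮ ∧
      ∀ g ∈ G, ∀ c : ℝ, ⟪u₁, g (c • u₂)⟫ = 0 := by
  set K := V.direction
  have hfix : ∀ g ∈ G, ∀ d ∈ K, g.linearPart d = d := fun g hg d hd => by
    obtain ⟨v, hv⟩ := htrans g hg
    exact g.linearPart_apply_eq_self_of_mem_direction h0V hv hd
  set S : Set (Module.End ℝ E) := IsometryEquiv.linearPart '' (G : Set (E ≃ᵢ E))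
  have hS : ∀ f ∈ S, ∀ f' ∈ S, f * f' = f' * f := by
    rintro _ ⟨g, hg, rfl⟩ _ ⟨g', hg', rfl⟩
    rw [← IsometryEquiv.linearPart_mul, ← IsometryEquiv.linearPart_mul, hcomm g hg g' hg']
  have hSK : ∀ f ∈ S, Kᗮ ∈ f.invtSubmodule := by
    rintro _ ⟨g, hg, rfl⟩
    exact IsometryEquiv.orthogonal_mem_invtSubmodule_linearPart (hfix g hg)
  obtain ⟨U, hUK, hU, hU2, hUS⟩ := Module.End.exists_invtSubmodule_finrank_le_two hS
    (Submodule.orthogonal_ne_bot_of_finrank_lt (by omega)) hSK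
  have hKU : finrank ℝ ↥(K ⊔ U) < finrank ℝ E :=
    (Submodule.finrank_add_le_finrank_add_finrank K U).trans_lt (by omega)
  obtain ⟨u₂, hu₂U, hu₂⟩ := U.exists_norm_eq_one_mem hU
  obtain ⟨u₁, hu₁KU, hu₁⟩ :=
    (K ⊔ U)ᗮ.exists_norm_eq_one_mem (Submodule.orthogonal_ne_bot_of_finrank_lt hKU)
  refine ⟨u₁, u₂, hu₁, hu₂, Submodule.orthogonal_le le_sup_left hu₁KU, hUK hu₂U,
    fun g hg c => Submodule.inner_left_of_mem_orthogonal ?_ hu₁KU⟩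
  have hg0 : g 0 ∈ K := by simpa using AffineSubspace.vsub_mem_direction (hGV g hg 0 h0V) h0V
  rw [g.apply_eq_linearPart_add, add_comm]
  have hgu₂ : g.linearPart (c • u₂) ∈ U := by
    rw [map_smul]
    exact U.smul_mem c (hUS _ ⟨g, hg, rfl⟩ hu₂U)
  exact Submodule.add_mem_sup hg0 hgu₂

end InnerProductSpace

theorem length_estimate_orthogonal_general {n : ℕ} (Γ G : Subgroup (Isom n))
    (V : AffineSubspace ℝ (En n))
    (hpair : IsCocompactTranslationPair Γ G V)
    (habel : ∀ g ∈ G, ∀ g' ∈ G, g * g' = g' * g)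
    (h0V : (0 : En n) ∈ V) (k : ℕ) (hk : k = Module.finrank ℝ V.direction)
    (hkn : k + 2 < n) :
    ∃ u₁ u₂ : En n, ‖u₁‖ = 1 ∧ ‖u₂‖ = 1 ∧ u₁ ∈ V.directionᗮ ∧ u₂ ∈ V.directionᗮ ∧
      ∀ σ : ℝ → En n, Continuous σ →
        eVariationOn σ (Set.Icc 0 1) ≠ ⊤ →
        (∃ c : ℝ, 0 ≤ c ∧ σ 0 = c • u₁) →
        (∃ γ ∈ G, ∃ c : ℝ, 0 ≤ c ∧ σ 1 = γ (c • u₂)) →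
        ∀ s : ℝ,
          s = sInf ((fun t => Metric.infDist (σ t) (V : Set (En n))) '' Set.Icc 0 1) →
          0 < s →
          ENNReal.ofReal (Real.sqrt 2 * s) ≤ eVariationOn σ (Set.Icc 0 1) := by
  obtain ⟨u₁, u₂, hu₁, hu₂, hu₁V, hu₂V, horth⟩ := exists_unit_orthogonal_to_orbit h0V
    hpair.invariant hpair.translation habel (by rw [finrank_euclideanSpace_fin]; omega)
  refine ⟨u₁, u₂, hu₁, hu₂, hu₁V, hu₂V, ?_⟩
  rintro σ - - ⟨c, -, hσ0⟩ ⟨γ, hγ, c', -, hσ1⟩ s rfl hs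
  have h0 : (0 : ℝ) ∈ Set.Icc (0 : ℝ) 1 := ⟨le_rfl, zero_le_one⟩
  have h1 : (1 : ℝ) ∈ Set.Icc (0 : ℝ) 1 := ⟨zero_le_one, le_rfl⟩
  have hσ : ⟪σ 0, σ 1⟫ = 0 := by rw [hσ0, hσ1, inner_smul_left, horth γ hγ c', mul_zero]
  have hdist := sqrt_two_mul_le_dist_of_inner_eq_zero hσ hs.le
    (by simpa using csInf_image_infDist_le_dist h0 h0V)
    (by simpa using csInf_image_infDist_le_dist h1 h0V)
  calc ENNReal.ofReal (√2 * _) ≤ ENNReal.ofReal (dist (σ 0) (σ 1)) :=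
        ENNReal.ofReal_le_ofReal hdist
    _ = edist (σ 0) (σ 1) := (edist_dist _ _).symm
    _ ≤ eVariationOn σ (Set.Icc 0 1) := eVariationOn.edist_le σ h0 h1

/-- (Eriksson-Bique's length estimate.) Let `(G, V)` be a cocompact
translation pair of a discrete `Γ ≤ E(n)` with `G` abelian, `V` linear and
`k = dim V < n − 2`. Then there are unit vectors `u₁, u₂ ∈ V^⊥` such that every finite-length
path `σ` from `L₁ = [0,∞)u₁` to `⋃_{γ∈G} γ([0,∞)u₂)` with `s = inf_t d(σ(t), V) > 0`
has length at least `√2 · s`. -/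
theorem length_estimate_orthogonal {n : ℕ} (Γ G : Subgroup (Isom n))
    (V : AffineSubspace ℝ (En n)) (hΓ : IsDiscreteSubgroup Γ)
    (hpair : IsCocompactTranslationPair Γ G V)
    (habel : ∀ g ∈ G, ∀ g' ∈ G, g * g' = g' * g)
    (h0V : (0 : En n) ∈ V) (k : ℕ) (hk : k = Module.finrank ℝ V.direction)
    (hkn : k + 2 < n) :
    ∃ u₁ u₂ : En n, ‖u₁‖ = 1 ∧ ‖u₂‖ = 1 ∧ u₁ ∈ V.directionᗮ ∧ u₂ ∈ V.directionᗮ ∧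
      ∀ σ : ℝ → En n, Continuous σ →
        eVariationOn σ (Set.Icc 0 1) ≠ ⊤ →
        (∃ c : ℝ, 0 ≤ c ∧ σ 0 = c • u₁) →
        (∃ γ ∈ G, ∃ c : ℝ, 0 ≤ c ∧ σ 1 = γ (c • u₂)) →
        ∀ s : ℝ,
          s = sInf ((fun t => Metric.infDist (σ t) (V : Set (En n))) '' Set.Icc 0 1) →
          0 < s →
          ENNReal.ofReal (Real.sqrt 2 * s) ≤ eVariationOn σ (Set.Icc 0 1) :=
  length_estimate_orthogonal_general Γ G V hpair habel h0V k hk hkn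
end
end

section
/- (Phragmén–Brouwer property of ℝⁿ.) Let n ≥ 2, let A and B be disjoint closed subsets of ℝⁿ, and let x, y ∈ ℝⁿ \ (A ∪ B). If x and y lie in different connected components of ℝⁿ \ (A ∪ B), then x and y lie in different connected components of ℝⁿ \ A, or x and y lie in different connected components of ℝⁿ \ B. -/
open Metric Filter MeasureTheory Asymptotics

noncomputable section

/-!
Take `u : X → [0, 1]` with `u⁻¹{0} = A` and `u⁻¹{1} = B`, and let `W` be the component of `x` in
the complement of `A ∪ B`. Since `∂W ⊆ A ∪ B`, the map `u mod 1` on `W`, extended by `0`, is a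
continuous map to the circle; on a simply connected space it lifts to `g : X → ℝ` with `g = u` on
`closure W` and `g` integral off `W`. A connected set through `x` missing `A` cannot reach
`{g ≤ 0}` (off `closure W` the function `g` is locally constant, on `closure W \ A` it is `u > 0`),
so `g y ≥ 1` if it contains `y ∉ W`; symmetrically, one missing `B` forces `g y ≤ 0`.
-/

open Set

theorem exists_continuous_preimage_zero_one_of_isClosed {X : Type*} [TopologicalSpace X]
    [PerfectlyNormalSpace X] {A B : Set X} (hA : IsClosed A) (hB : IsClosed B)
    (hAB : Disjoint A B) :
    ∃ u : C(X, ℝ), u ⁻¹' {0} = A ∧ u ⁻¹' {1} = B ∧ ∀ z, u z ∈ Icc (0 : ℝ) 1 := by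
  obtain ⟨f, hfA, hf⟩ := perfectlyNormalSpace_iff_forall_isClosed_preimage_zero.mp ‹_› A hA
  obtain ⟨g, hgB, hg⟩ := perfectlyNormalSpace_iff_forall_isClosed_preimage_zero.mp ‹_› B hB
  have hf_pos : ∀ z ∉ A, 0 < f z := fun z hz =>
    (hf z).1.lt_of_ne' fun h => hz (hfA ▸ h)
  have hg_pos : ∀ z ∉ B, 0 < g z := fun z hz =>
    (hg z).1.lt_of_ne' fun h => hz (hgB ▸ h)
  have hsum_pos : ∀ z, 0 < f z + g z := by
    intro z
    by_cases hzA : z ∈ A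
    · linarith [(hf z).1, hg_pos z (hAB.notMem_of_mem_left hzA)]
    · linarith [hf_pos z hzA, (hg z).1]
  refine ⟨⟨fun z => f z / (f z + g z),
    f.continuous.div (f.continuous.add g.continuous) fun z => (hsum_pos z).ne'⟩, ?_, ?_, ?_⟩
  · ext z
    simp only [ContinuousMap.coe_mk, mem_preimage, mem_singleton_iff,
      div_eq_zero_iff, (hsum_pos z).ne', or_false]
    rw [hfA]; rfl
  · ext z
    simp only [ContinuousMap.coe_mk, mem_preimage, mem_singleton_iff,
      div_eq_one_iff_eq (hsum_pos z).ne', left_eq_add]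
    rw [hgB]; rfl
  · intro z
    exact ⟨div_nonneg (hf z).1 (hsum_pos z).le,
      (div_le_one (hsum_pos z)).mpr (le_add_of_nonneg_right (hg z).1)⟩

theorem IsOpen.frontier_connectedComponentIn_subset {X : Type*} [TopologicalSpace X]
    [LocallyConnectedSpace X] {F : Set X} (hF : IsOpen F) (x : X) :
    frontier (connectedComponentIn F x) ⊆ Fᶜ := by
  intro z hz hzF
  rw [hF.connectedComponentIn.frontier_eq] at hz
  obtain ⟨w, hwz, hwx⟩ := mem_closure_iff.mp hz.1 _ hF.connectedComponentIn
    (mem_connectedComponentIn hzF)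
  rw [connectedComponentIn_eq hwx, ← connectedComponentIn_eq hwz] at hz
  exact hz.2 (mem_connectedComponentIn hzF)

theorem IsPreconnected.forall_pos_of_intValued_off {X : Type*} [TopologicalSpace X]
    {S W : Set X} (hS : IsPreconnected S) {g : X → ℝ} (hg : Continuous g)
    (hW : ∀ z ∈ S ∩ closure W, 0 < g z) (hint : ∀ z ∉ W, ∃ k : ℤ, g z = k)
    {x : X} (hxS : x ∈ S) (hx : 0 < g x) :
    ∀ z ∈ S, 0 < g z := by
  have hdisj : Disjoint (g ⁻¹' Ioi 0) ((closure W)ᶜ ∩ g ⁻¹' Iio (1 / 2)) := by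
    refine disjoint_left.mpr fun z hpos ⟨hzW, hsmall⟩ => ?_
    obtain ⟨k, hk⟩ := hint z fun h => hzW (subset_closure h)
    simp only [mem_preimage, mem_Ioi, mem_Iio, hk] at hpos hsmall
    have : (0 : ℤ) < k := by exact_mod_cast hpos
    have : (k : ℝ) < 1 := by linarith
    norm_cast at this
    omega
  have hcover : S ⊆ g ⁻¹' Ioi 0 ∪ ((closure W)ᶜ ∩ g ⁻¹' Iio (1 / 2)) := by
    intro z hz
    by_contra! h
    simp only [mem_union, mem_preimage, mem_Ioi, mem_inter_iff, mem_compl_iff, mem_Iio,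
      not_or, not_lt, not_and] at h
    by_cases hzW : z ∈ closure W
    · exact h.1.not_gt (hW z ⟨hz, hzW⟩)
    · linarith [h.2 hzW]
  exact fun z hz => hS.subset_left_of_subset_union (isOpen_Ioi.preimage hg)
    (isClosed_closure.isOpen_compl.inter (isOpen_Iio.preimage hg)) hdisj hcover
    ⟨x, hxS, hx⟩ hz

theorem IsPreconnected.exists_continuous_eqOn_closure_intValued_off {X : Type*}
    [TopologicalSpace X] [SimplyConnectedSpace X] [LocallyPathConnectedSpace X]
    {W : Set X} (hW : IsPreconnected W) {u : X → ℝ} (hu : Continuous u)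
    (hfr : ∀ z ∈ frontier W, ∃ k : ℤ, u z = k) :
    ∃ g : X → ℝ, Continuous g ∧ EqOn g u (closure W) ∧ ∀ z ∉ W, ∃ k : ℤ, g z = k := by
  classical
  rcases W.eq_empty_or_nonempty with rfl | ⟨x, hxW⟩
  · exact ⟨0, continuous_const, by simp, fun _ _ => ⟨0, by simp⟩⟩
  let p : ℝ → AddCircle (1 : ℝ) := (↑)
  have hp : IsCoveringMap p := AddCircle.isCoveringMap_coe 1
  let F : C(X, AddCircle (1 : ℝ)) :=
    ⟨fun z => if z ∈ W then p (u z) else 0,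
      Continuous.if (fun z hz => (AddCircle.coe_eq_zero_iff 1).mpr <| by
        obtain ⟨k, hk⟩ := hfr z hz; exact ⟨k, by simp [hk]⟩)
        (hp.continuous.comp hu) continuous_const⟩
  obtain ⟨θ, ⟨hθx, hθF⟩, -⟩ := hp.existsUnique_continuousMap_lifts F x (u x) (by simp [F, hxW])
  have hθu : EqOn θ u W :=
    hp.eqOn_of_comp_eqOn hW θ.continuous.continuousOn hu.continuousOn
      (fun z hz => by simpa [F, hz] using congrFun hθF z) hxW hθx
  refine ⟨θ, θ.continuous, hθu.closure θ.continuous hu, fun z hz => ?_⟩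
  have : p (θ z) = 0 := by simpa [F, hz] using congrFun hθF z
  obtain ⟨k, hk⟩ := (AddCircle.coe_eq_zero_iff 1).mp this
  exact ⟨k, by simp [← hk]⟩

theorem phragmen_brouwer_of_simplyConnectedSpace {X : Type*} [TopologicalSpace X]
    [PerfectlyNormalSpace X] [SimplyConnectedSpace X] [LocallyPathConnectedSpace X]
    {A B : Set X} (hA : IsClosed A) (hB : IsClosed B) (hAB : Disjoint A B)
    {x y : X} (hx : x ∉ A ∪ B) (hsep : y ∉ connectedComponentIn (A ∪ B)ᶜ x) :
    y ∉ connectedComponentIn Aᶜ x ∨ y ∉ connectedComponentIn Bᶜ x := by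
  by_contra! ⟨hyA, hyB⟩
  obtain ⟨u, huA, huB, hu01⟩ := exists_continuous_preimage_zero_one_of_isClosed hA hB hAB
  have hu_pos : ∀ z ∉ A, 0 < u z := fun z hz => (hu01 z).1.lt_of_ne' fun h => hz (huA ▸ h)
  have hu_lt : ∀ z ∉ B, u z < 1 := fun z hz => (hu01 z).2.lt_of_ne fun h => hz (huB ▸ h)
  set W := connectedComponentIn (A ∪ B)ᶜ x
  have hfr : ∀ z ∈ frontier W, ∃ k : ℤ, u z = k := by
    intro z hz
    rcases not_not.mp ((hA.union hB).isOpen_compl.frontier_connectedComponentIn_subset x hz)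
      with hzA | hzB
    · exact ⟨0, by simpa using (huA ▸ hzA : z ∈ u ⁻¹' {0})⟩
    · exact ⟨1, by simpa using (huB ▸ hzB : z ∈ u ⁻¹' {1})⟩
  obtain ⟨g, hg, hgu, hint⟩ := isPreconnected_connectedComponentIn
    |>.exists_continuous_eqOn_closure_intValued_off u.continuous hfr
  have hxW : x ∈ closure W := subset_closure (mem_connectedComponentIn hx)
  have hxA : x ∉ A := fun h => hx (Or.inl h)
  have hxB : x ∉ B := fun h => hx (Or.inr h)
  have hgy_pos : 0 < g y :=
    isPreconnected_connectedComponentIn.forall_pos_of_intValued_off hg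
      (fun z ⟨hzA, hzW⟩ => hgu hzW ▸ hu_pos z (connectedComponentIn_subset _ _ hzA)) hint
      (mem_connectedComponentIn hxA) (hgu hxW ▸ hu_pos x hxA) y hyA
  have hgy_lt : 0 < 1 - g y :=
    isPreconnected_connectedComponentIn.forall_pos_of_intValued_off (g := fun z => 1 - g z)
      (continuous_const.sub hg)
      (fun z ⟨hzB, hzW⟩ => sub_pos.mpr (hgu hzW ▸ hu_lt z (connectedComponentIn_subset _ _ hzB)))
      (fun z hz => let ⟨k, hk⟩ := hint z hz; ⟨1 - k, by simp [hk]⟩)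
      (mem_connectedComponentIn hxB) (sub_pos.mpr (hgu hxW ▸ hu_lt x hxB)) y hyB
  obtain ⟨k, hk⟩ := hint y hsep
  rw [hk] at hgy_pos hgy_lt
  have : (0 : ℤ) < k := by exact_mod_cast hgy_pos
  have : k < 1 := by exact_mod_cast sub_pos.mp hgy_lt
  omega

theorem phragmen_brouwer_general {n : ℕ} (A B : Set (En n))
    (hA : IsClosed A) (hB : IsClosed B) (hAB : Disjoint A B)
    (x y : En n) (hx : x ∉ A ∪ B)
    (hsep : y ∉ connectedComponentIn (A ∪ B)ᶜ x) :
    y ∉ connectedComponentIn Aᶜ x ∨ y ∉ connectedComponentIn Bᶜ x :=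
  phragmen_brouwer_of_simplyConnectedSpace hA hB hAB hx hsep

/-- (Phragmén–Brouwer property of `ℝⁿ`.) Let `n ≥ 2`, let `A, B ⊆ ℝⁿ` be
disjoint closed sets, and let `x, y ∉ A ∪ B`. If `A ∪ B` separates `x` from `y`, then `A`
separates `x` from `y` or `B` separates `x` from `y`. -/
theorem phragmen_brouwer {n : ℕ} (hn : 2 ≤ n) (A B : Set (En n))
    (hA : IsClosed A) (hB : IsClosed B) (hAB : Disjoint A B)
    (x y : En n) (hx : x ∉ A ∪ B) (hy : y ∉ A ∪ B)
    (hsep : y ∉ connectedComponentIn (A ∪ B)ᶜ x) :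
    y ∉ connectedComponentIn Aᶜ x ∨ y ∉ connectedComponentIn Bᶜ x :=
  phragmen_brouwer_general A B hA hB hAB x y hx hsep
end
end
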